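/- arXiv:1411.8003 — 3 statements merged into one kernel-verified Lean document; each statement's English description precedes it below -/
import Mathlib

section
/- Let M ∈ ℝ^{m×n} be a rank-r μ-incoherent matrix with largest and smallest nonzero singular values Σmax ≥ Σmin > 0, and let β_T > 0. Suppose X ∈ ℝ^{m×r} and Y ∈ ℝ^{n×r} satisfy d := ‖M − X·Yᵀ‖_F ≤ Σmin/(10r), ‖X‖_F ≤ β_T and ‖Y‖_F ≤ β_T. Then there exist U ∈ ℝ^{m×r} and V ∈ ℝ^{n×r} such that: (i) U·Vᵀ = M; (ii) ‖U‖_F ≤ ‖X‖_F; (iii) ‖U − X‖_F ≤ (5β_T/(4Σmin))·d and ‖V − Y‖_F ≤ (5β_T/(2Σmin))·d; (iv) ‖U^{(i)}‖² ≤ (rμ/m)·β_T² for every row index 1 ≤ i ≤ m, and ‖V^{(j)}‖² ≤ (3rμ/(2n))·β_T² for every row index 1 ≤ j ≤ n. -/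
/-! With `D = M - X Yᵀ`, `d = ‖D‖_F`, `C = Ûᵀ X` and `B = V̂ᵀ Y`, take `U = Û C` and
`V = V̂ Σ C⁻ᵀ`, so that `U Vᵀ = M` and `‖U‖_F = ‖C‖_F ≤ ‖X‖_F`. Since `B Cᵀ = Σ - V̂ᵀ Dᵀ Û` and
`C Bᵀ` is its transpose, the smallest singular values of `B`, `C`, and hence of `Y`, are at least
`c = (Σmin - d) / β_T`. The residuals `(U - X) Yᵀ = (I - Û Ûᵀ) D` and `(V - Y) Cᵀ = Dᵀ Û` have
norm at most `d`, so `‖U - X‖_F` and `‖V - Y‖_F` are at most `d / c ≤ (10/9) β_T d / Σmin`.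
The row bounds follow from `‖Û⁽ⁱ⁾ C‖ ≤ ‖Û⁽ⁱ⁾‖ ‖C‖_F` and `‖V̂⁽ʲ⁾ Σ C⁻ᵀ‖ ≤ ‖V̂⁽ʲ⁾‖ ‖V‖_F`. -/

open Matrix
open scoped Classical

noncomputable section

/-- Frobenius norm of a real matrix. -/
def frob {m n : ℕ} (A : Matrix (Fin m) (Fin n) ℝ) : ℝ :=
  Real.sqrt (∑ i, ∑ j, A i j ^ 2)

/-- Euclidean norm of the `i`-th row of a matrix. -/
def rowNorm {m n : ℕ} (A : Matrix (Fin m) (Fin n) ℝ) (i : Fin m) : ℝ :=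
  Real.sqrt (∑ j, A i j ^ 2)

/-- Frobenius inner product `⟨A,B⟩ = trace(AᵀB)`. -/
def finner {m n : ℕ} (A B : Matrix (Fin m) (Fin n) ℝ) : ℝ :=
  ∑ i, ∑ j, A i j * B i j

/-- Projection onto the set of entries indexed by `Ω` (other entries are set to `0`). -/
def projOmega {m n : ℕ} (Ω : Finset (Fin m × Fin n)) (A : Matrix (Fin m) (Fin n) ℝ) :
    Matrix (Fin m) (Fin n) ℝ :=
  Matrix.of fun i j => if (i, j) ∈ Ω then A i j else 0

/-- `G₀(z) = (max{0, z-1})²`. -/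
def G0 (z : ℝ) : ℝ := max 0 (z - 1) ^ 2

/-- `G₀′(z) = 2·max{0, z-1}`. -/
def G0' (z : ℝ) : ℝ := 2 * max 0 (z - 1)

/-- The matrix whose `i`-th row is the `i`-th row of `A` and whose other rows vanish. -/
def rowMat {m n : ℕ} (A : Matrix (Fin m) (Fin n) ℝ) (i : Fin m) :
    Matrix (Fin m) (Fin n) ℝ :=
  Matrix.of fun i' j => if i' = i then A i j else 0

/-- The regularizer `G(X,Y)`. -/
def Greg {m n r : ℕ} (ρ β1 β2 βT : ℝ) (X : Matrix (Fin m) (Fin r) ℝ)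
    (Y : Matrix (Fin n) (Fin r) ℝ) : ℝ :=
  ρ * ∑ i, G0 (3 * rowNorm X i ^ 2 / (2 * β1 ^ 2)) +
    ρ * ∑ j, G0 (3 * rowNorm Y j ^ 2 / (2 * β2 ^ 2)) +
    ρ * G0 (3 * frob X ^ 2 / (2 * βT ^ 2)) +
    ρ * G0 (3 * frob Y ^ 2 / (2 * βT ^ 2))

/-- The regularized objective `F̃(X,Y)`. -/
def Ftilde {m n r : ℕ} (Ω : Finset (Fin m × Fin n)) (M : Matrix (Fin m) (Fin n) ℝ)
    (ρ β1 β2 βT : ℝ) (X : Matrix (Fin m) (Fin r) ℝ) (Y : Matrix (Fin n) (Fin r) ℝ) : ℝ :=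
  (1 / 2) * frob (projOmega Ω (M - X * Yᵀ)) ^ 2 + Greg ρ β1 β2 βT X Y

/-- Gradient of the regularizer with respect to one of the factors. -/
def gradG1 {m r : ℕ} (ρ β βT : ℝ) (X : Matrix (Fin m) (Fin r) ℝ) :
    Matrix (Fin m) (Fin r) ℝ :=
  (∑ i, (ρ * G0' (3 * rowNorm X i ^ 2 / (2 * β ^ 2)) * (3 / β ^ 2)) • rowMat X i) +
    (ρ * G0' (3 * frob X ^ 2 / (2 * βT ^ 2)) * (3 / βT ^ 2)) • X

/-- `∇_X F̃(X,Y)`. -/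
def gradX {m n r : ℕ} (Ω : Finset (Fin m × Fin n)) (M : Matrix (Fin m) (Fin n) ℝ)
    (ρ β1 βT : ℝ) (X : Matrix (Fin m) (Fin r) ℝ) (Y : Matrix (Fin n) (Fin r) ℝ) :
    Matrix (Fin m) (Fin r) ℝ :=
  projOmega Ω (X * Yᵀ - M) * Y + gradG1 ρ β1 βT X

/-- `∇_Y F̃(X,Y)`. -/
def gradY {m n r : ℕ} (Ω : Finset (Fin m × Fin n)) (M : Matrix (Fin m) (Fin n) ℝ)
    (ρ β2 βT : ℝ) (X : Matrix (Fin m) (Fin r) ℝ) (Y : Matrix (Fin n) (Fin r) ℝ) :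
    Matrix (Fin n) (Fin r) ℝ :=
  (projOmega Ω (X * Yᵀ - M))ᵀ * X + gradG1 ρ β2 βT Y

/-- Membership in `K₁`. -/
def K1mem {m n r : ℕ} (β1 β2 : ℝ) (X : Matrix (Fin m) (Fin r) ℝ)
    (Y : Matrix (Fin n) (Fin r) ℝ) : Prop :=
  (∀ i, rowNorm X i ≤ β1) ∧ ∀ j, rowNorm Y j ≤ β2

/-- Membership in `K₂`. -/
def K2mem {m n r : ℕ} (βT : ℝ) (X : Matrix (Fin m) (Fin r) ℝ)
    (Y : Matrix (Fin n) (Fin r) ℝ) : Prop :=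
  frob X ≤ βT ∧ frob Y ≤ βT

/-- Membership in `K(t) = {(X,Y) : ‖M - XYᵀ‖_F ≤ t}`. -/
def Kmem {m n r : ℕ} (M : Matrix (Fin m) (Fin n) ℝ) (t : ℝ)
    (X : Matrix (Fin m) (Fin r) ℝ) (Y : Matrix (Fin n) (Fin r) ℝ) : Prop :=
  frob (M - X * Yᵀ) ≤ t

attribute [local instance] Matrix.frobeniusNormedAddCommGroup

section Frobenius

variable {ι κ : Type*} [Fintype ι] [Fintype κ]

lemma frob_eq_norm {m n : ℕ} (A : Matrix (Fin m) (Fin n) ℝ) : frob A = ‖A‖ := by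
  simp [frob, Matrix.frobenius_norm_def, Real.sqrt_eq_rpow]

lemma rowNorm_eq_norm_replicateRow {m n : ℕ} (A : Matrix (Fin m) (Fin n) ℝ) (i : Fin m) :
    rowNorm A i = ‖replicateRow (Fin 1) (A i)‖ := by
  simp [rowNorm, Matrix.frobenius_norm_def, Real.sqrt_eq_rpow]

lemma frobenius_norm_sq_eq_sum (A : Matrix ι κ ℝ) : ‖A‖ ^ 2 = ∑ i, ∑ j, A i j ^ 2 := by
  rw [Matrix.frobenius_norm_def, ← Real.rpow_natCast, ← Real.rpow_mul (by positivity)]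
  norm_num

lemma frobenius_norm_sq_eq_trace (A : Matrix ι κ ℝ) : ‖A‖ ^ 2 = trace (Aᵀ * A) := by
  simp only [frobenius_norm_sq_eq_sum, trace, diag, mul_apply, transpose_apply, ← sq]
  exact Finset.sum_comm

end Frobenius

section Orthonormal

variable {ι κ ο : Type*} [Fintype ι] [Fintype κ] [Fintype ο] [DecidableEq ι]
  {P : Matrix κ ι ℝ}

lemma norm_mul_of_orthonormal (hP : Pᵀ * P = 1) (B : Matrix ι ο ℝ) : ‖P * B‖ = ‖B‖ := by
  have h : ‖P * B‖ ^ 2 = ‖B‖ ^ 2 := by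
    rw [frobenius_norm_sq_eq_trace, frobenius_norm_sq_eq_trace, transpose_mul,
      Matrix.mul_assoc, ← Matrix.mul_assoc Pᵀ, hP, Matrix.one_mul]
  exact (pow_left_inj₀ (norm_nonneg _) (norm_nonneg _) two_ne_zero).1 h

lemma norm_sq_eq_proj_add_residual (hP : Pᵀ * P = 1) (A : Matrix κ ο ℝ) :
    ‖A‖ ^ 2 = ‖Pᵀ * A‖ ^ 2 + ‖A - P * (Pᵀ * A)‖ ^ 2 := by
  have hcross : (P * (Pᵀ * A))ᵀ * (A - P * (Pᵀ * A)) = 0 := by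
    simp only [transpose_mul, transpose_transpose, Matrix.mul_sub, Matrix.mul_assoc]
    rw [← Matrix.mul_assoc Pᵀ P, hP, Matrix.one_mul, sub_self]
  have hcross' : (A - P * (Pᵀ * A))ᵀ * (P * (Pᵀ * A)) = 0 := by
    rw [← transpose_transpose (_ᵀ * _), transpose_mul, transpose_transpose, hcross,
      transpose_zero]
  rw [← norm_mul_of_orthonormal hP (Pᵀ * A)]
  conv_lhs => rw [← add_sub_cancel (P * (Pᵀ * A)) A]
  simp only [frobenius_norm_sq_eq_trace, transpose_add, Matrix.add_mul, Matrix.mul_add, hcross,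
    hcross', trace_add, trace_zero]
  ring

lemma norm_transpose_mul_le_of_orthonormal (hP : Pᵀ * P = 1) (A : Matrix κ ο ℝ) :
    ‖Pᵀ * A‖ ≤ ‖A‖ := by
  refine le_of_sq_le_sq ?_ (norm_nonneg A)
  rw [norm_sq_eq_proj_add_residual hP A]
  nlinarith [sq_nonneg ‖A - P * (Pᵀ * A)‖]

lemma norm_sub_proj_le_of_orthonormal (hP : Pᵀ * P = 1) (A : Matrix κ ο ℝ) :
    ‖A - P * (Pᵀ * A)‖ ≤ ‖A‖ := by
  refine le_of_sq_le_sq ?_ (norm_nonneg A)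
  rw [norm_sq_eq_proj_add_residual hP A]
  nlinarith [sq_nonneg ‖Pᵀ * A‖]

lemma norm_mul_le_of_orthonormal (hP : Pᵀ * P = 1) (A : Matrix ο κ ℝ) : ‖A * P‖ ≤ ‖A‖ := by
  rw [← frobenius_norm_transpose, transpose_mul, ← frobenius_norm_transpose A]
  exact norm_transpose_mul_le_of_orthonormal hP Aᵀ

end Orthonormal

lemma rowNorm_mul_sq_le {m k n : ℕ} (P : Matrix (Fin m) (Fin k) ℝ) (A : Matrix (Fin k) (Fin n) ℝ)
    (i : Fin m) {a b : ℝ} (hP : ∑ l, P i l ^ 2 ≤ a) (hA : ‖A‖ ≤ b) :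
    rowNorm (P * A) i ^ 2 ≤ a * b ^ 2 := by
  have hrow : rowNorm (P * A) i ≤ rowNorm P i * ‖A‖ := by
    rw [rowNorm_eq_norm_replicateRow, rowNorm_eq_norm_replicateRow, mul_apply_eq_vecMul,
      replicateRow_vecMul]
    exact Matrix.frobenius_norm_mul _ _
  have hP' : rowNorm P i ^ 2 ≤ a := by
    rwa [rowNorm, Real.sq_sqrt (by positivity)]
  calc rowNorm (P * A) i ^ 2 ≤ (rowNorm P i * ‖A‖) ^ 2 :=
        pow_le_pow_left₀ (Real.sqrt_nonneg _) hrow 2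
    _ = rowNorm P i ^ 2 * ‖A‖ ^ 2 := mul_pow _ _ _
    _ ≤ a * b ^ 2 := mul_le_mul hP' (pow_le_pow_left₀ (norm_nonneg A) hA 2) (by positivity)
        ((sq_nonneg _).trans hP')

/-- For square `A` this says that the smallest singular value of `A` is at least `s`. -/
def MulBoundedBelow {κ ι : Type*} [Fintype κ] [Fintype ι] (A : Matrix κ ι ℝ) (s : ℝ) : Prop :=
  ∀ (p : ℕ) (W : Matrix (Fin p) κ ℝ), s * ‖W‖ ≤ ‖W * A‖

namespace MulBoundedBelow

variable {ι κ : Type*} [Fintype ι] [Fintype κ] {s : ℝ}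

lemma diagonal [DecidableEq ι] {σ : ι → ℝ} (hs : 0 ≤ s) (hσ : ∀ k, s ≤ σ k) :
    MulBoundedBelow (diagonal σ) s := by
  intro p W
  refine le_of_sq_le_sq ?_ (norm_nonneg _)
  simp only [mul_pow, frobenius_norm_sq_eq_sum, mul_diagonal, Finset.mul_sum]
  refine Finset.sum_le_sum fun i _ => Finset.sum_le_sum fun k _ => ?_
  rw [mul_comm (W i k ^ 2)]
  exact mul_le_mul_of_nonneg_right (pow_le_pow_left₀ hs (hσ k) 2) (sq_nonneg _)

lemma sub {A G : Matrix κ ι ℝ} (hA : MulBoundedBelow A s) {d : ℝ} (hG : ‖G‖ ≤ d) :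
    MulBoundedBelow (A - G) (s - d) := by
  intro p W
  have hWG : ‖W * G‖ ≤ ‖W‖ * d :=
    (Matrix.frobenius_norm_mul W G).trans (mul_le_mul_of_nonneg_left hG (norm_nonneg W))
  calc (s - d) * ‖W‖ = s * ‖W‖ - ‖W‖ * d := by ring
    _ ≤ ‖W * A‖ - ‖W * G‖ := by linarith [hA p W]
    _ ≤ ‖W * (A - G)‖ := by rw [Matrix.mul_sub]; exact norm_sub_norm_le _ _

lemma isUnit_det [DecidableEq ι] {A : Matrix ι ι ℝ} (hA : MulBoundedBelow A s) (hs : 0 < s) :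
    IsUnit A.det := by
  rw [isUnit_iff_ne_zero]
  intro hdet
  obtain ⟨v, hv, hvA⟩ := exists_vecMul_eq_zero_iff.2 hdet
  have h := hA 1 (replicateRow (Fin 1) v)
  rw [← replicateRow_vecMul, hvA, replicateRow_zero, norm_zero] at h
  have : 0 < ‖replicateRow (Fin 1) v‖ := norm_pos_iff.2 ((replicateRow_eq_zero v).not.2 hv)
  nlinarith

lemma of_mul_left [DecidableEq ι] {Q A : Matrix ι ι ℝ} (h : MulBoundedBelow (Q * A) s)
    (hs : 0 < s) {β : ℝ} (hβ : 0 < β) (hQ : ‖Q‖ ≤ β) : MulBoundedBelow A (s / β) := by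
  have hQunit : IsUnit Q.det := by
    have := h.isUnit_det hs
    rw [det_mul, IsUnit.mul_iff] at this
    exact this.1
  intro p W
  have hW : W = W * Q⁻¹ * Q := by rw [Matrix.mul_assoc, nonsing_inv_mul _ hQunit, Matrix.mul_one]
  have hWβ : ‖W‖ ≤ ‖W * Q⁻¹‖ * β := by
    conv_lhs => rw [hW]
    exact (Matrix.frobenius_norm_mul _ _).trans
      (mul_le_mul_of_nonneg_left hQ (norm_nonneg _))
  calc s / β * ‖W‖ ≤ s * ‖W * Q⁻¹‖ := by
        rw [div_mul_eq_mul_div, div_le_iff₀ hβ]; nlinarith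
    _ ≤ ‖W * Q⁻¹ * (Q * A)‖ := h p _
    _ = ‖W * A‖ := by
        rw [Matrix.mul_assoc, ← Matrix.mul_assoc Q⁻¹, nonsing_inv_mul _ hQunit, Matrix.one_mul]

lemma of_mul_orthonormal {ο : Type*} [Fintype ο] [DecidableEq ο] {A : Matrix κ ι ℝ}
    {P : Matrix ι ο ℝ} (hP : Pᵀ * P = 1) (h : MulBoundedBelow (A * P) s) : MulBoundedBelow A s := by
  intro p W
  calc s * ‖W‖ ≤ ‖W * (A * P)‖ := h p W
    _ ≤ ‖W * A‖ := by rw [← Matrix.mul_assoc]; exact norm_mul_le_of_orthonormal hP _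

lemma norm_le {A : Matrix κ ι ℝ} (h : MulBoundedBelow A s) (hs : 0 < s) {p : ℕ}
    (W : Matrix (Fin p) κ ℝ) : ‖W‖ ≤ ‖W * A‖ / s := by
  rw [le_div_iff₀ hs, mul_comm]; exact h p W

end MulBoundedBelow

section LowRankFactorization

variable {m n r : ℕ} {Uh : Matrix (Fin m) (Fin r) ℝ} {Vh : Matrix (Fin n) (Fin r) ℝ}
  {σ : Fin r → ℝ} {M : Matrix (Fin m) (Fin n) ℝ} {X : Matrix (Fin m) (Fin r) ℝ}
  {Y : Matrix (Fin n) (Fin r) ℝ}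

lemma transpose_eq_of_svd (hM : M = Uh * diagonal σ * Vhᵀ) : Mᵀ = Vh * diagonal σ * Uhᵀ := by
  rw [hM, transpose_mul, transpose_mul, diagonal_transpose, transpose_transpose,
    Matrix.mul_assoc]

lemma cross_factor_eq (hUorth : Uhᵀ * Uh = 1) (hVorth : Vhᵀ * Vh = 1)
    (hM : M = Uh * diagonal σ * Vhᵀ) :
    Vhᵀ * Y * (Uhᵀ * X)ᵀ = diagonal σ - Vhᵀ * (M - X * Yᵀ)ᵀ * Uh := by
  have hdiag : Vhᵀ * Mᵀ * Uh = diagonal σ := by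
    rw [transpose_eq_of_svd hM]
    simp only [Matrix.mul_assoc]
    rw [hUorth, Matrix.mul_one, ← Matrix.mul_assoc, hVorth, Matrix.one_mul]
  rw [transpose_sub, Matrix.mul_sub, Matrix.sub_mul, hdiag, sub_sub_cancel, transpose_mul,
    transpose_mul, transpose_transpose]
  simp only [transpose_transpose, Matrix.mul_assoc]

lemma mulBoundedBelow_cross_factor (hUorth : Uhᵀ * Uh = 1) (hVorth : Vhᵀ * Vh = 1)
    (hM : M = Uh * diagonal σ * Vhᵀ) {s : ℝ} (hs : 0 ≤ s) (hσ : ∀ k, s ≤ σ k) :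
    MulBoundedBelow (Vhᵀ * Y * (Uhᵀ * X)ᵀ) (s - ‖M - X * Yᵀ‖) ∧
      MulBoundedBelow (Uhᵀ * X * (Vhᵀ * Y)ᵀ) (s - ‖M - X * Yᵀ‖) := by
  have hF : ‖Vhᵀ * (M - X * Yᵀ)ᵀ * Uh‖ ≤ ‖M - X * Yᵀ‖ :=
    calc ‖Vhᵀ * (M - X * Yᵀ)ᵀ * Uh‖ ≤ ‖Vhᵀ * (M - X * Yᵀ)ᵀ‖ := norm_mul_le_of_orthonormal hUorth _
      _ ≤ ‖(M - X * Yᵀ)ᵀ‖ := norm_transpose_mul_le_of_orthonormal hVorth _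
      _ = ‖M - X * Yᵀ‖ := frobenius_norm_transpose _
  have hdiag := MulBoundedBelow.diagonal hs hσ
  constructor
  · rw [cross_factor_eq hUorth hVorth hM]
    exact hdiag.sub hF
  · rw [← transpose_transpose (Uhᵀ * X), ← transpose_mul, cross_factor_eq hUorth hVorth hM,
      transpose_sub, diagonal_transpose]
    exact hdiag.sub ((frobenius_norm_transpose _).trans_le hF)

lemma factors_mulBoundedBelow (hUorth : Uhᵀ * Uh = 1) (hVorth : Vhᵀ * Vh = 1)
    (hM : M = Uh * diagonal σ * Vhᵀ) {s β : ℝ} (hσ : ∀ k, s ≤ σ k) (hβ : 0 < β)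
    (hX : ‖X‖ ≤ β) (hY : ‖Y‖ ≤ β) (hgap : ‖M - X * Yᵀ‖ < s) :
    IsUnit (Uhᵀ * X).det ∧ MulBoundedBelow (Uhᵀ * X)ᵀ ((s - ‖M - X * Yᵀ‖) / β) ∧
      MulBoundedBelow Yᵀ ((s - ‖M - X * Yᵀ‖) / β) := by
  have hgap' : 0 < s - ‖M - X * Yᵀ‖ := sub_pos.2 hgap
  obtain ⟨hBC, hCB⟩ :=
    mulBoundedBelow_cross_factor (X := X) (Y := Y) hUorth hVorth hM
      ((norm_nonneg _).trans hgap.le) hσ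
  have hC : ‖Uhᵀ * X‖ ≤ β := (norm_transpose_mul_le_of_orthonormal hUorth X).trans hX
  have hB : ‖Vhᵀ * Y‖ ≤ β := (norm_transpose_mul_le_of_orthonormal hVorth Y).trans hY
  refine ⟨?_, hBC.of_mul_left hgap' hβ hB, ?_⟩
  · have := hCB.isUnit_det hgap'
    rw [det_mul, IsUnit.mul_iff] at this
    exact this.1
  · refine MulBoundedBelow.of_mul_orthonormal hVorth ?_
    rw [← transpose_transpose Vh, ← transpose_mul]
    exact hCB.of_mul_left hgap' hβ hC

lemma norm_proj_sub_le (hUorth : Uhᵀ * Uh = 1) (hM : M = Uh * diagonal σ * Vhᵀ) {c : ℝ}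
    (hY : MulBoundedBelow Yᵀ c) (hc : 0 < c) :
    ‖Uh * (Uhᵀ * X) - X‖ ≤ ‖M - X * Yᵀ‖ / c := by
  have hUM : Uh * (Uhᵀ * M) = M := by
    rw [hM]
    simp only [Matrix.mul_assoc]
    rw [← Matrix.mul_assoc Uhᵀ, hUorth, Matrix.one_mul]
  have hres : (Uh * (Uhᵀ * X) - X) * Yᵀ =
      (M - X * Yᵀ) - Uh * (Uhᵀ * (M - X * Yᵀ)) := by
    rw [Matrix.mul_sub, Matrix.mul_sub, hUM, Matrix.sub_mul]
    simp only [Matrix.mul_assoc]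
    abel
  calc ‖Uh * (Uhᵀ * X) - X‖ ≤ ‖(Uh * (Uhᵀ * X) - X) * Yᵀ‖ / c := hY.norm_le hc _
    _ ≤ ‖M - X * Yᵀ‖ / c := by
        rw [hres]; gcongr; exact norm_sub_proj_le_of_orthonormal hUorth _

lemma mul_factor_eq (hM : M = Uh * diagonal σ * Vhᵀ)
    (hC : IsUnit (Uhᵀ * X).det) : Uh * (Uhᵀ * X) * (Vh * (diagonal σ * (Uhᵀ * X)⁻¹ᵀ))ᵀ = M := by
  rw [transpose_mul, transpose_mul, transpose_transpose, diagonal_transpose]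
  simp only [Matrix.mul_assoc]
  rw [← Matrix.mul_assoc Uhᵀ X, ← Matrix.mul_assoc (Uhᵀ * X), mul_nonsing_inv _ hC,
    Matrix.one_mul, hM, Matrix.mul_assoc]

lemma norm_factor_sub_le (hUorth : Uhᵀ * Uh = 1) (hM : M = Uh * diagonal σ * Vhᵀ) {c : ℝ}
    (hC : IsUnit (Uhᵀ * X).det) (hCb : MulBoundedBelow (Uhᵀ * X)ᵀ c) (hc : 0 < c) :
    ‖Vh * (diagonal σ * (Uhᵀ * X)⁻¹ᵀ) - Y‖ ≤ ‖M - X * Yᵀ‖ / c := by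
  have hres : (Vh * (diagonal σ * (Uhᵀ * X)⁻¹ᵀ) - Y) * (Uhᵀ * X)ᵀ =
      (Uhᵀ * (M - X * Yᵀ))ᵀ := by
    rw [Matrix.sub_mul, Matrix.mul_assoc, Matrix.mul_assoc, ← transpose_mul,
      mul_nonsing_inv _ hC, transpose_one, Matrix.mul_one]
    have hVdiag : Vh * diagonal σ = Mᵀ * Uh := by
      rw [transpose_eq_of_svd hM, Matrix.mul_assoc, hUorth, Matrix.mul_one]
    rw [hVdiag]
    simp only [transpose_mul, transpose_sub, transpose_transpose, Matrix.sub_mul,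
      Matrix.mul_assoc]
  calc ‖Vh * (diagonal σ * (Uhᵀ * X)⁻¹ᵀ) - Y‖
      ≤ ‖(Vh * (diagonal σ * (Uhᵀ * X)⁻¹ᵀ) - Y) * (Uhᵀ * X)ᵀ‖ / c := hCb.norm_le hc _
    _ ≤ ‖M - X * Yᵀ‖ / c := by
        rw [hres, frobenius_norm_transpose]; gcongr
        exact norm_transpose_mul_le_of_orthonormal hUorth _

lemma exists_factorization_near (hUorth : Uhᵀ * Uh = 1) (hVorth : Vhᵀ * Vh = 1)
    (hM : M = Uh * diagonal σ * Vhᵀ) {s β : ℝ} (hσ : ∀ k, s ≤ σ k) (hβ : 0 < β)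
    (hX : ‖X‖ ≤ β) (hY : ‖Y‖ ≤ β) (hgap : ‖M - X * Yᵀ‖ < s) :
    ∃ (U : Matrix (Fin m) (Fin r) ℝ) (V : Matrix (Fin n) (Fin r) ℝ),
      U * Vᵀ = M ∧ ‖U‖ ≤ ‖X‖ ∧
      ‖U - X‖ ≤ ‖M - X * Yᵀ‖ / ((s - ‖M - X * Yᵀ‖) / β) ∧
      ‖V - Y‖ ≤ ‖M - X * Yᵀ‖ / ((s - ‖M - X * Yᵀ‖) / β) ∧
      (∀ i, rowNorm U i ^ 2 ≤ (∑ k, Uh i k ^ 2) * β ^ 2) ∧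
      (∀ j, rowNorm V j ^ 2 ≤
        (∑ k, Vh j k ^ 2) * (β + ‖M - X * Yᵀ‖ / ((s - ‖M - X * Yᵀ‖) / β)) ^ 2) := by
  have hc : 0 < (s - ‖M - X * Yᵀ‖) / β := div_pos (sub_pos.2 hgap) hβ
  obtain ⟨hC, hCb, hYb⟩ := factors_mulBoundedBelow hUorth hVorth hM hσ hβ hX hY hgap
  have hVY := norm_factor_sub_le (Y := Y) hUorth hM hC hCb hc
  have hV : ‖diagonal σ * (Uhᵀ * X)⁻¹ᵀ‖ ≤ β + ‖M - X * Yᵀ‖ / ((s - ‖M - X * Yᵀ‖) / β) := by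
    rw [← norm_mul_of_orthonormal hVorth, ← sub_add_cancel (Vh * _) Y, add_comm]
    exact (norm_add_le _ _).trans (add_le_add hY hVY)
  have hCX : ‖Uhᵀ * X‖ ≤ ‖X‖ := norm_transpose_mul_le_of_orthonormal hUorth X
  refine ⟨Uh * (Uhᵀ * X), Vh * (diagonal σ * (Uhᵀ * X)⁻¹ᵀ), mul_factor_eq hM hC, ?_,
    norm_proj_sub_le hUorth hM hYb hc, hVY, fun i => rowNorm_mul_sq_le _ _ i le_rfl (hCX.trans hX),
    fun j => rowNorm_mul_sq_le _ _ j le_rfl hV⟩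
  rwa [norm_mul_of_orthonormal hUorth]

end LowRankFactorization

lemma div_div_sub_le {s d β : ℝ} (hs : 0 < s) (hd0 : 0 ≤ d) (hd : d ≤ s / 10) (hβ : 0 < β) :
    d / ((s - d) / β) ≤ 5 * β / (4 * s) * d := by
  have ht : 0 ≤ β / s * d := by positivity
  have hβd : β * d = β / s * d * s := by field_simp
  rw [div_div_eq_mul_div, div_le_iff₀ (by linarith), mul_comm d, hβd,
    show 5 * β / (4 * s) * d = 5 / 4 * (β / s * d) by ring]
  nlinarith [mul_le_mul_of_nonneg_left hd ht]

theorem stmt3_general (m n r : ℕ) (hr : 1 ≤ r)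
    (μ βT Smin : ℝ) (hβT : 0 < βT)
    (M : Matrix (Fin m) (Fin n) ℝ)
    (Uh : Matrix (Fin m) (Fin r) ℝ) (Vh : Matrix (Fin n) (Fin r) ℝ)
    (σ : Fin r → ℝ)
    (hUorth : Uhᵀ * Uh = 1) (hVorth : Vhᵀ * Vh = 1)
    (hσpos : ∀ k, 0 < σ k)
    (hM : M = Uh * Matrix.diagonal σ * Vhᵀ)
    (hSmin : (∀ k, Smin ≤ σ k) ∧ ∃ k, σ k = Smin)
    (hincU : ∀ i, ∑ k, Uh i k ^ 2 ≤ μ * r / m)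
    (hincV : ∀ j, ∑ k, Vh j k ^ 2 ≤ μ * r / n)
    (X : Matrix (Fin m) (Fin r) ℝ) (Y : Matrix (Fin n) (Fin r) ℝ)
    (hd : frob (M - X * Yᵀ) ≤ Smin / (10 * r))
    (hX : frob X ≤ βT) (hY : frob Y ≤ βT) :
    ∃ (U : Matrix (Fin m) (Fin r) ℝ) (V : Matrix (Fin n) (Fin r) ℝ),
      U * Vᵀ = M ∧
      frob U ≤ frob X ∧
      frob (U - X) ≤ 5 * βT / (4 * Smin) * frob (M - X * Yᵀ) ∧
      frob (V - Y) ≤ 5 * βT / (2 * Smin) * frob (M - X * Yᵀ) ∧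
      (∀ i, rowNorm U i ^ 2 ≤ r * μ / m * βT ^ 2) ∧
      (∀ j, rowNorm V j ^ 2 ≤ 3 * r * μ / (2 * n) * βT ^ 2) := by
  simp only [frob_eq_norm] at hd hX hY ⊢
  obtain ⟨k₀, hk₀⟩ := hSmin.2
  have hSmin_pos : 0 < Smin := hk₀ ▸ hσpos k₀
  have hd10 : ‖M - X * Yᵀ‖ ≤ Smin / 10 :=
    hd.trans (div_le_div_of_nonneg_left hSmin_pos.le (by norm_num) (by norm_cast; omega))
  obtain ⟨U, V, hUV, hU, hUX, hVY, hrowU, hrowV⟩ :=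
    exists_factorization_near hUorth hVorth hM hSmin.1 hβT hX hY (by linarith)
  have hgap := div_div_sub_le hSmin_pos (norm_nonneg _) hd10 hβT
  have hgap' : 5 * βT / (4 * Smin) * ‖M - X * Yᵀ‖ ≤ βT / 8 := by
    rw [div_mul_eq_mul_div, div_le_iff₀ (by positivity)]; nlinarith
  refine ⟨U, V, hUV, hU, hUX.trans hgap, hVY.trans (hgap.trans ?_),
    fun i => (hrowU i).trans ?_, fun j => (hrowV j).trans ?_⟩
  · gcongr; norm_num
  · rw [mul_comm (r : ℝ)]
    exact mul_le_mul_of_nonneg_right (hincU i) (sq_nonneg _)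
  · have hμ : 0 ≤ μ * r / n := (by positivity : (0 : ℝ) ≤ ∑ k, Vh j k ^ 2).trans (hincV j)
    have he : 0 ≤ ‖M - X * Yᵀ‖ / ((Smin - ‖M - X * Yᵀ‖) / βT) := (norm_nonneg _).trans hUX
    calc _ ≤ μ * r / n * (9 / 8 * βT) ^ 2 :=
          mul_le_mul (hincV j) (pow_le_pow_left₀ (by positivity) (by linarith) 2) (sq_nonneg _) hμ
      _ ≤ 3 * r * μ / (2 * n) * βT ^ 2 := by
          rw [show 3 * r * μ / (2 * n) * βT ^ 2 = 3 / 2 * (μ * r / n * βT ^ 2) by ring]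
          nlinarith [mul_nonneg hμ (sq_nonneg βT)]

/-- **Proposition 1.** If `M` is a rank-`r` `μ`-incoherent matrix and
`XYᵀ` approximates `M` with `d = ‖M - XYᵀ‖_F ≤ Smin/(10r)`, `‖X‖_F ≤ β_T`, `‖Y‖_F ≤ β_T`,
then there is a factorization `M = UVᵀ` with `U` close to `X`, `V` close to `Y`,
`‖U‖_F ≤ ‖X‖_F`, and `U, V` incoherent. -/
theorem stmt3 (m n r : ℕ) (hm : 1 ≤ m) (hn : 1 ≤ n) (hr : 1 ≤ r)
    (μ βT Smax Smin : ℝ) (hβT : 0 < βT)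
    (M : Matrix (Fin m) (Fin n) ℝ)
    (Uh : Matrix (Fin m) (Fin r) ℝ) (Vh : Matrix (Fin n) (Fin r) ℝ)
    (σ : Fin r → ℝ)
    (hUorth : Uhᵀ * Uh = 1) (hVorth : Vhᵀ * Vh = 1)
    (hσpos : ∀ k, 0 < σ k)
    (hσmono : ∀ k l : Fin r, k ≤ l → σ l ≤ σ k)
    (hM : M = Uh * Matrix.diagonal σ * Vhᵀ)
    (hSmax : (∀ k, σ k ≤ Smax) ∧ ∃ k, σ k = Smax)
    (hSmin : (∀ k, Smin ≤ σ k) ∧ ∃ k, σ k = Smin)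
    (hincU : ∀ i, ∑ k, Uh i k ^ 2 ≤ μ * r / m)
    (hincV : ∀ j, ∑ k, Vh j k ^ 2 ≤ μ * r / n)
    (X : Matrix (Fin m) (Fin r) ℝ) (Y : Matrix (Fin n) (Fin r) ℝ)
    (hd : frob (M - X * Yᵀ) ≤ Smin / (10 * r))
    (hX : frob X ≤ βT) (hY : frob Y ≤ βT) :
    ∃ (U : Matrix (Fin m) (Fin r) ℝ) (V : Matrix (Fin n) (Fin r) ℝ),
      U * Vᵀ = M ∧
      frob U ≤ frob X ∧
      frob (U - X) ≤ 5 * βT / (4 * Smin) * frob (M - X * Yᵀ) ∧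
      frob (V - Y) ≤ 5 * βT / (2 * Smin) * frob (M - X * Yᵀ) ∧
      (∀ i, rowNorm U i ^ 2 ≤ r * μ / m * βT ^ 2) ∧
      (∀ j, rowNorm V j ^ 2 ≤ 3 * r * μ / (2 * n) * βT ^ 2) :=
  stmt3_general m n r hr μ βT Smin hβT M Uh Vh σ hUorth hVorth hσpos hM hSmin hincU hincV X Y hd hX
    hY

end
end

section
/- There exist absolute constants C_T ≥ 1 and C_d ≥ 1 (the paper's proof takes C_T = 20 and C_d = 54) such that the following holds. Let Σ = diag(Σ₁,…,Σ_r) ∈ ℝ^{r×r} with Σ₁ ≥ ⋯ ≥ Σ_r > 0, and set β_T = √(C_T·r·Σ₁). Suppose X, Y ∈ ℝ^{r×r} satisfy d := ‖Σ − X·Yᵀ‖_F ≤ Σ_r/(C_d·r), √(3/5)·β_T ≤ ‖X‖_F ≤ β_T and √(3/5)·β_T ≤ ‖Y‖_F ≤ β_T. Then there exist U, V ∈ ℝ^{r×r} such that: (i) U·Vᵀ = Σ; (ii) ‖U‖_F ≤ ‖X‖_F and ‖V‖_F ≤ ‖Y‖_F; (iii) ‖U − X‖_F·‖V − Y‖_F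 ≤ 23·√r·(β_T²/Σ_r²)·d², and max{‖U − X‖_F, ‖V − Y‖_F} ≤ (36/7)·√r·(β_T/Σ_r)·d. -/
open Matrix
open scoped Classical

noncomputable section

section Helpers

variable {m n k : ℕ}

lemma frob_nonneg (A : Matrix (Fin m) (Fin n) ℝ) : 0 ≤ frob A := Real.sqrt_nonneg _

lemma frob_sq (A : Matrix (Fin m) (Fin n) ℝ) : frob A ^ 2 = ∑ i, ∑ j, A i j ^ 2 :=
  Real.sq_sqrt (by positivity)

lemma le_of_sq_le_sq' {a b : ℝ} (ha : 0 ≤ a) (hb : 0 ≤ b) (h : a ^ 2 ≤ b ^ 2) : a ≤ b := by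
  have h2 := Real.sqrt_le_sqrt h
  rwa [Real.sqrt_sq ha, Real.sqrt_sq hb] at h2

lemma finner_self (A : Matrix (Fin m) (Fin n) ℝ) : finner A A = frob A ^ 2 := by
  rw [frob_sq]; unfold finner; congr 1; funext i; congr 1; funext j; ring

lemma finner_comm (A B : Matrix (Fin m) (Fin n) ℝ) : finner A B = finner B A := by
  unfold finner; congr 1; funext i; congr 1; funext j; ring

lemma finner_add_right (A B C : Matrix (Fin m) (Fin n) ℝ) :
    finner A (B + C) = finner A B + finner A C := by
  unfold finner
  rw [← Finset.sum_add_distrib]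
  congr 1; funext i
  rw [← Finset.sum_add_distrib]
  congr 1; funext j
  simp [Matrix.add_apply]; ring

lemma finner_smul_right (c : ℝ) (A B : Matrix (Fin m) (Fin n) ℝ) :
    finner A (c • B) = c * finner A B := by
  unfold finner
  rw [Finset.mul_sum]
  congr 1; funext i
  rw [Finset.mul_sum]
  congr 1; funext j
  simp [Matrix.smul_apply]; ring

lemma finner_neg_right (A B : Matrix (Fin m) (Fin n) ℝ) : finner A (-B) = -finner A B := by
  have h := finner_smul_right (-1) A B
  simpa using h

lemma finner_sub_right (A B C : Matrix (Fin m) (Fin n) ℝ) :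
    finner A (B - C) = finner A B - finner A C := by
  rw [sub_eq_add_neg, finner_add_right, finner_neg_right]; ring

lemma abs_finner_le (A B : Matrix (Fin m) (Fin n) ℝ) : |finner A B| ≤ frob A * frob B := by
  have key : (finner A B) ^ 2 ≤ frob A ^ 2 * frob B ^ 2 := by
    rw [frob_sq, frob_sq]
    have h := Finset.sum_mul_sq_le_sq_mul_sq Finset.univ
      (fun p : Fin m × Fin n => A p.1 p.2) (fun p : Fin m × Fin n => B p.1 p.2)
    simpa [finner, Fintype.sum_prod_type] using h
  apply le_of_sq_le_sq' (abs_nonneg _) (mul_nonneg (frob_nonneg A) (frob_nonneg B))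
  rw [sq_abs, mul_pow]
  exact key

lemma finner_le (A B : Matrix (Fin m) (Fin n) ℝ) : finner A B ≤ frob A * frob B :=
  (le_abs_self _).trans (abs_finner_le A B)

lemma frob_sq_add (A B : Matrix (Fin m) (Fin n) ℝ) :
    frob (A + B) ^ 2 = frob A ^ 2 + 2 * finner A B + frob B ^ 2 := by
  rw [frob_sq, frob_sq, frob_sq]
  unfold finner
  simp only [Matrix.add_apply, add_sq, Finset.sum_add_distrib, Finset.mul_sum]
  ring

lemma frob_add_le (A B : Matrix (Fin m) (Fin n) ℝ) : frob (A + B) ≤ frob A + frob B := by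
  apply le_of_sq_le_sq' (frob_nonneg _) (add_nonneg (frob_nonneg A) (frob_nonneg B))
  rw [frob_sq_add, add_sq]
  nlinarith [finner_le A B, frob_nonneg A, frob_nonneg B]

lemma frob_smul (c : ℝ) (A : Matrix (Fin m) (Fin n) ℝ) : frob (c • A) = |c| * frob A := by
  unfold frob
  rw [← Real.sqrt_sq_eq_abs, ← Real.sqrt_mul (sq_nonneg c)]
  congr 1
  rw [Finset.mul_sum]
  congr 1; funext i
  rw [Finset.mul_sum]
  congr 1; funext j
  simp [Matrix.smul_apply]; ring

lemma frob_neg (A : Matrix (Fin m) (Fin n) ℝ) : frob (-A) = frob A := by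
  have h := frob_smul (-1) A
  simpa using h

lemma frob_sub_le (A B : Matrix (Fin m) (Fin n) ℝ) : frob (A - B) ≤ frob A + frob B := by
  rw [sub_eq_add_neg]
  exact (frob_add_le A (-B)).trans (by rw [frob_neg])

lemma frob_transpose (A : Matrix (Fin m) (Fin n) ℝ) : frob Aᵀ = frob A := by
  unfold frob
  congr 1
  rw [Finset.sum_comm]
  simp [Matrix.transpose_apply]

lemma frob_mul_le (A : Matrix (Fin m) (Fin n) ℝ) (B : Matrix (Fin n) (Fin k) ℝ) :
    frob (A * B) ≤ frob A * frob B := by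
  apply le_of_sq_le_sq' (frob_nonneg _) (mul_nonneg (frob_nonneg A) (frob_nonneg B))
  rw [mul_pow, frob_sq, frob_sq, frob_sq]
  calc ∑ i, ∑ l, (A * B) i l ^ 2
      ≤ ∑ i, ∑ l, (∑ j, A i j ^ 2) * (∑ j, B j l ^ 2) := by
        apply Finset.sum_le_sum; intro i _
        apply Finset.sum_le_sum; intro l _
        have h := Finset.sum_mul_sq_le_sq_mul_sq Finset.univ (fun j => A i j) (fun j => B j l)
        simpa [Matrix.mul_apply] using h
    _ = (∑ i, ∑ j, A i j ^ 2) * ∑ j, ∑ l, B j l ^ 2 := by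
        simp_rw [← Finset.mul_sum]
        rw [← Finset.sum_mul]
        congr 1
        exact Finset.sum_comm

lemma finner_mul_right (A : Matrix (Fin m) (Fin k) ℝ) (B : Matrix (Fin m) (Fin n) ℝ)
    (C : Matrix (Fin n) (Fin k) ℝ) : finner A (B * C) = finner (Bᵀ * A) C := by
  unfold finner
  simp_rw [Matrix.mul_apply, Matrix.transpose_apply, Finset.mul_sum, Finset.sum_mul]
  calc ∑ i, ∑ l, ∑ j, A i l * (B i j * C j l)
      = ∑ i, ∑ j, ∑ l, A i l * (B i j * C j l) :=
        Finset.sum_congr rfl (fun i _ => Finset.sum_comm)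
    _ = ∑ j, ∑ i, ∑ l, A i l * (B i j * C j l) := Finset.sum_comm
    _ = ∑ j, ∑ l, ∑ i, B i j * A i l * C j l := by
        apply Finset.sum_congr rfl; intro j _
        rw [Finset.sum_comm]
        apply Finset.sum_congr rfl; intro l _
        apply Finset.sum_congr rfl; intro i _
        ring

lemma finner_transpose (A B : Matrix (Fin m) (Fin n) ℝ) : finner Aᵀ Bᵀ = finner A B := by
  unfold finner
  rw [Finset.sum_comm]
  simp [Matrix.transpose_apply]

lemma finner_one (P : Matrix (Fin n) (Fin n) ℝ) : finner P 1 = ∑ j, P j j := by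
  unfold finner
  congr 1; funext j
  simp [Matrix.one_apply]

lemma finner_gram_one (A : Matrix (Fin m) (Fin n) ℝ) :
    finner (Aᵀ * A) 1 = frob A ^ 2 := by
  rw [finner_one, frob_sq, Finset.sum_comm]
  congr 1; funext j
  simp [Matrix.mul_apply, Matrix.transpose_apply, pow_two]

lemma frob_one : frob (1 : Matrix (Fin n) (Fin n) ℝ) = Real.sqrt n := by
  unfold frob
  congr 1
  have : ∀ i : Fin n, ∑ j, (1 : Matrix (Fin n) (Fin n) ℝ) i j ^ 2 = 1 := by
    intro i
    rw [Finset.sum_eq_single i]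
    · simp [Matrix.one_apply]
    · intro b _ hb; simp [Matrix.one_apply, (Ne.symm hb)]
    · simp
  simp [this]

lemma finner_gram (A : Matrix (Fin m) (Fin n) ℝ) (Y : Matrix (Fin k) (Fin n) ℝ) :
    finner (Aᵀ * A) (Yᵀ * Y) = frob (A * Yᵀ) ^ 2 := by
  have h1 : finner (Aᵀ * A) (Yᵀ * Y) = finner (Y * (Aᵀ * A)) Y := by
    rw [finner_mul_right (Aᵀ * A) Yᵀ Y, Matrix.transpose_transpose]
  have h2 : frob (A * Yᵀ) ^ 2 = finner (Aᵀ * (A * Yᵀ)) Yᵀ := by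
    rw [← finner_self, finner_mul_right (A * Yᵀ) A Yᵀ]
  have h3 : finner (Y * (Aᵀ * A)) Y = finner (Aᵀ * (A * Yᵀ)) Yᵀ := by
    rw [← finner_transpose (Y * (Aᵀ * A)) Y]
    congr 1
    rw [Matrix.transpose_mul, Matrix.transpose_mul, Matrix.transpose_transpose, Matrix.mul_assoc]
  rw [h1, h3, ← h2]

lemma frob_diag_mul_le (τ : Fin m → ℝ) (A : Matrix (Fin m) (Fin n) ℝ) (c : ℝ) (hc0 : 0 ≤ c)
    (hc : ∀ i, |τ i| ≤ c) : frob (Matrix.diagonal τ * A) ≤ c * frob A := by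
  apply le_of_sq_le_sq' (frob_nonneg _) (mul_nonneg hc0 (frob_nonneg A))
  rw [mul_pow, frob_sq, frob_sq, Finset.mul_sum]
  apply Finset.sum_le_sum; intro i _
  rw [Finset.mul_sum]
  apply Finset.sum_le_sum; intro j _
  rw [Matrix.diagonal_mul, mul_pow]
  have h1 : τ i ^ 2 ≤ c ^ 2 := by
    rw [← sq_abs]
    exact pow_le_pow_left₀ (abs_nonneg _) (hc i) 2
  nlinarith [sq_nonneg (A i j)]

lemma frob_mul_diag_le (A : Matrix (Fin m) (Fin n) ℝ) (τ : Fin n → ℝ) (c : ℝ) (hc0 : 0 ≤ c)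
    (hc : ∀ j, |τ j| ≤ c) : frob (A * Matrix.diagonal τ) ≤ c * frob A := by
  apply le_of_sq_le_sq' (frob_nonneg _) (mul_nonneg hc0 (frob_nonneg A))
  rw [mul_pow, frob_sq, frob_sq, Finset.mul_sum]
  apply Finset.sum_le_sum; intro i _
  rw [Finset.mul_sum]
  apply Finset.sum_le_sum; intro j _
  rw [Matrix.mul_diagonal, mul_pow]
  have h1 : τ j ^ 2 ≤ c ^ 2 := by
    rw [← sq_abs]
    exact pow_le_pow_left₀ (abs_nonneg _) (hc j) 2
  nlinarith [sq_nonneg (A i j)]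

lemma isUnit_one_sub_det {n : ℕ} (M : Matrix (Fin n) (Fin n) ℝ) (h : frob M < 1) :
    IsUnit (1 - M).det := by
  rw [isUnit_iff_ne_zero]
  intro hdet
  obtain ⟨v, hv, hv0⟩ := (Matrix.exists_mulVec_eq_zero_iff).mpr hdet
  have hvM : v = M.mulVec v := by
    have h1 : (1 - M).mulVec v = Matrix.mulVec 1 v - M.mulVec v := Matrix.sub_mulVec _ _ _
    rw [hv0, Matrix.one_mulVec] at h1
    exact sub_eq_zero.mp h1.symm
  have hpos : 0 < ∑ j, v j ^ 2 := by
    obtain ⟨j, hj⟩ := Function.ne_iff.mp hv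
    have : 0 < v j ^ 2 := sq_pos_of_ne_zero hj
    exact Finset.sum_pos' (fun i _ => sq_nonneg _) ⟨j, Finset.mem_univ j, this⟩
  have hsum : ∑ j, v j ^ 2 ≤ frob M ^ 2 * ∑ j, v j ^ 2 := by
    calc ∑ j, v j ^ 2 = ∑ i, (M.mulVec v i) ^ 2 := by rw [← hvM]
      _ ≤ ∑ i, (∑ j, M i j ^ 2) * (∑ j, v j ^ 2) := by
          apply Finset.sum_le_sum; intro i _
          have h := Finset.sum_mul_sq_le_sq_mul_sq Finset.univ (fun j => M i j) (fun j => v j)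
          simpa [Matrix.mulVec, dotProduct] using h
      _ = frob M ^ 2 * ∑ j, v j ^ 2 := by rw [← Finset.sum_mul, frob_sq]
  have h2 : frob M ^ 2 < 1 := by nlinarith [frob_nonneg M]
  nlinarith

end Helpers

set_option maxHeartbeats 4000000 in
/-- **Proposition 2′.** The `r×r` reduction of Proposition 2. -/
theorem stmt6 :
    ∃ CT Cd : ℝ, 1 ≤ CT ∧ 1 ≤ Cd ∧
      ∀ (r : ℕ), 1 ≤ r →
      ∀ (σ : Fin r → ℝ),
        (∀ k, 0 < σ k) → (∀ k l : Fin r, k ≤ l → σ l ≤ σ k) →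
        ∀ Smax Smin : ℝ,
        ((∀ k, σ k ≤ Smax) ∧ ∃ k, σ k = Smax) →
        ((∀ k, Smin ≤ σ k) ∧ ∃ k, σ k = Smin) →
        ∀ X Y : Matrix (Fin r) (Fin r) ℝ,
          frob (Matrix.diagonal σ - X * Yᵀ) ≤ Smin / (Cd * r) →
          Real.sqrt (3 / 5) * Real.sqrt (CT * r * Smax) ≤ frob X →
          frob X ≤ Real.sqrt (CT * r * Smax) →
          Real.sqrt (3 / 5) * Real.sqrt (CT * r * Smax) ≤ frob Y →
          frob Y ≤ Real.sqrt (CT * r * Smax) →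
          ∃ U V : Matrix (Fin r) (Fin r) ℝ,
            U * Vᵀ = Matrix.diagonal σ ∧
            frob U ≤ frob X ∧
            frob V ≤ frob Y ∧
            frob (U - X) * frob (V - Y) ≤
              23 * Real.sqrt r * (Real.sqrt (CT * r * Smax) ^ 2 / Smin ^ 2) *
                frob (Matrix.diagonal σ - X * Yᵀ) ^ 2 ∧
            max (frob (U - X)) (frob (V - Y)) ≤
              36 / 7 * Real.sqrt r * (Real.sqrt (CT * r * Smax) / Smin) *
                frob (Matrix.diagonal σ - X * Yᵀ) := by
  refine ⟨20, 54, by norm_num, by norm_num, ?_⟩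
  intro r hr σ hσpos hσmono Smax Smin hmaxh hminh X Y hdle hX1 hX2 hY1 hY2
  obtain ⟨hmax1, kmax, hkmax⟩ := hmaxh
  obtain ⟨hmin1, kmin, hkmin⟩ := hminh
  have hS : 0 < Smax := hkmax ▸ hσpos kmax
  have hs : 0 < Smin := hkmin ▸ hσpos kmin
  have hr1 : (1:ℝ) ≤ (r:ℝ) := by exact_mod_cast hr
  have hr0 : (0:ℝ) < (r:ℝ) := by linarith
  have hsq1 : 1 ≤ Real.sqrt (r:ℝ) := by
    rw [show (1:ℝ) = Real.sqrt 1 by simp]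
    exact Real.sqrt_le_sqrt hr1
  have hsq2 : Real.sqrt (r:ℝ) ^ 2 = (r:ℝ) := Real.sq_sqrt hr0.le
  have hsqr : Real.sqrt (r:ℝ) ≤ (r:ℝ) := by nlinarith
  set β : ℝ := Real.sqrt (20 * (r:ℝ) * Smax) with hβ_def
  have hβ2 : β ^ 2 = 20 * (r:ℝ) * Smax := Real.sq_sqrt (by positivity)
  have hβpos : 0 < β := Real.sqrt_pos.mpr (by positivity)
  clear_value β
  set Dg := Matrix.diagonal σ with hDg_def
  set E := Dg - X * Yᵀ with hE_def
  clear_value Dg E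
  have hd0 : 0 ≤ frob E := frob_nonneg E
  have hx0 : 0 ≤ frob X := frob_nonneg X
  have hy0 : 0 ≤ frob Y := frob_nonneg Y
  have h35 : Real.sqrt (3/5) ^ 2 = 3/5 := Real.sq_sqrt (by norm_num)
  have hx2l : 12 * (r:ℝ) * Smax ≤ frob X ^ 2 := by
    have h1 := pow_le_pow_left₀ (by positivity) hX1 2
    rw [mul_pow, h35, hβ2] at h1; linarith
  have hx2u : frob X ^ 2 ≤ 20 * (r:ℝ) * Smax := by
    have h1 := pow_le_pow_left₀ hx0 hX2 2
    rwa [hβ2] at h1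
  have hy2l : 12 * (r:ℝ) * Smax ≤ frob Y ^ 2 := by
    have h1 := pow_le_pow_left₀ (by positivity) hY1 2
    rw [mul_pow, h35, hβ2] at h1; linarith
  -- the scalar μ
  obtain ⟨μ, hμ_def⟩ : ∃ x : ℝ, x = frob E / Smin := ⟨_, rfl⟩
  have hdμ : frob E = μ * Smin := by rw [hμ_def]; field_simp
  have hμ0 : 0 ≤ μ := by rw [hμ_def]; positivity
  have hμr : (r:ℝ) * μ ≤ 1 / 54 := by
    have h54 : frob E * (54 * (r:ℝ)) ≤ Smin := by
      rw [le_div_iff₀ (by positivity)] at hdle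
      linarith
    rw [hμ_def, show (r:ℝ) * (frob E / Smin) = (r:ℝ) * frob E / Smin by ring,
      div_le_iff₀ hs]
    linarith
  have hμ54 : μ ≤ 1 / 54 := by nlinarith
  -- the matrix M and A
  set Minv := Matrix.diagonal (fun j => (σ j)⁻¹) with hMinv_def
  set M := E * Minv with hM_def
  clear_value Minv M
  have hMfrob : frob M ≤ μ := by
    have h1 : frob M ≤ Smin⁻¹ * frob E := by
      rw [hM_def, hMinv_def]
      apply frob_mul_diag_le E _ _ (inv_nonneg.mpr hs.le)
      intro j
      rw [abs_of_pos (inv_pos.mpr (hσpos j))]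
      exact inv_anti₀ hs (hmin1 j)
    have h2 : Smin⁻¹ * frob E = μ := by rw [hμ_def]; field_simp
    linarith
  have hM1 : frob M < 1 := lt_of_le_of_lt (le_trans hMfrob hμ54) (by norm_num)
  have hdet : IsUnit (1 - M).det := isUnit_one_sub_det M hM1
  set A := (1 - M)⁻¹ * X with hA_def
  clear_value A
  have hA1 : (1 - M) * A = X := by
    rw [hA_def, ← Matrix.mul_assoc, Matrix.mul_nonsing_inv _ hdet, Matrix.one_mul]
  have hAX : A - X = M * A := by
    have h2 : (1 - M) * A = A - M * A := by rw [Matrix.sub_mul, Matrix.one_mul]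
    rw [← hA1, h2]; abel
  have hMDg : M * Dg = E := by
    rw [hM_def, Matrix.mul_assoc]
    have h3 : Minv * Dg = 1 := by
      rw [hMinv_def, hDg_def, Matrix.diagonal_mul_diagonal,
        show (fun i => (σ i)⁻¹ * σ i) = fun _ : Fin r => (1:ℝ) from
          funext fun j => inv_mul_cancel₀ (ne_of_gt (hσpos j)),
        Matrix.diagonal_one]
    rw [h3, Matrix.mul_one]
  have hAY : A * Yᵀ = Dg := by
    have hXY : X * Yᵀ = (1 - M) * Dg := by
      rw [Matrix.sub_mul, Matrix.one_mul, hMDg, hE_def]; abel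
    rw [hA_def, Matrix.mul_assoc, hXY]
    exact Matrix.nonsing_inv_mul_cancel_left (1 - M) Dg hdet
  have ha0 : 0 ≤ frob A := frob_nonneg A
  have hδ : frob (A - X) ≤ μ * frob A := by
    rw [hAX]
    calc frob (M * A) ≤ frob M * frob A := frob_mul_le _ _
      _ ≤ μ * frob A := mul_le_mul_of_nonneg_right hMfrob ha0
  have haX : frob A ≤ frob X + μ * frob A := by
    have h4 : A = X + (A - X) := by abel
    calc frob A = frob (X + (A - X)) := by rw [← h4]
      _ ≤ frob X + frob (A - X) := frob_add_le _ _
      _ ≤ frob X + μ * frob A := by linarith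
  have hXa : frob X ≤ frob A + μ * frob A := by
    have h4 : X = A + (X - A) := by abel
    have h5 : frob (X - A) = frob (A - X) := by
      rw [show X - A = -(A - X) by abel, frob_neg]
    calc frob X = frob (A + (X - A)) := by rw [← h4]
      _ ≤ frob A + frob (X - A) := frob_add_le _ _
      _ ≤ frob A + μ * frob A := by rw [h5]; linarith
  have haβ : frob A ≤ (54/53) * β := by
    linarith [mul_le_mul_of_nonneg_right hμ54 ha0]
  have hax2 : (23/2) * (r:ℝ) * Smax ≤ frob A ^ 2 := by
    have h55 : frob X ≤ (55/54) * frob A := by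
      linarith [mul_le_mul_of_nonneg_right hμ54 ha0]
    have h6 := pow_le_pow_left₀ hx0 h55 2
    rw [mul_pow] at h6
    nlinarith
  have hapos : 0 < frob A := by
    rcases eq_or_lt_of_le ha0 with h0 | h0
    · exfalso; rw [← h0] at hax2; nlinarith [mul_pos hr0 hS]
    · exact h0
  -- Gram matrix P
  set P := Aᵀ * A with hP_def
  have hPt : Pᵀ = P := by
    rw [hP_def, Matrix.transpose_mul, Matrix.transpose_transpose]
  have hp0 : 0 ≤ frob P := frob_nonneg P
  have hp1 : frob P ≤ frob A ^ 2 := by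
    have h1 := frob_mul_le Aᵀ A
    rw [frob_transpose] at h1
    rw [hP_def]
    nlinarith only [h1, frob_nonneg A]
  have hgram1 : finner P 1 = frob A ^ 2 := by
    rw [hP_def]; exact finner_gram_one A
  have hp2 : frob A ^ 2 ≤ Real.sqrt (r:ℝ) * frob P := by
    have h8 := finner_le P 1
    rw [frob_one] at h8
    rw [← hgram1]
    linarith [h8]
  have hppos : 0 < frob P := by
    nlinarith only [hp2, hsq1, hp0, mul_pos hapos hapos]
  have hpne : frob P ≠ 0 := ne_of_gt hppos
  have ha4 : frob A ^ 2 * frob A ^ 2 ≤ (r:ℝ) * frob P ^ 2 := by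
    have h9 := mul_le_mul hp2 hp2 (sq_nonneg (frob A)) (by positivity)
    nlinarith only [h9, hsq2, sq_nonneg (frob P)]
  -- γ and H
  obtain ⟨γ, hγ_def⟩ : ∃ x : ℝ, x = 2 * frob A ^ 2 / frob P ^ 2 := ⟨_, rfl⟩
  have hγ0 : 0 ≤ γ := by rw [hγ_def]; positivity
  have hγp2 : γ * frob P ^ 2 = 2 * frob A ^ 2 := by rw [hγ_def]; field_simp
  have hγp : γ * frob P ≤ 2 * Real.sqrt (r:ℝ) := by
    rw [hγ_def, div_mul_eq_mul_div, div_le_iff₀ (by positivity)]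
    nlinarith only [hp2, hppos, hp0]
  set H := (1 : Matrix (Fin r) (Fin r) ℝ) - γ • P with hH_def
  clear_value H
  have hHt : Hᵀ = H := by
    rw [hH_def, Matrix.transpose_sub, Matrix.transpose_one, Matrix.transpose_smul, hPt]
  have hfH : frob H ≤ 3 * Real.sqrt (r:ℝ) := by
    calc frob H ≤ frob (1 : Matrix (Fin r) (Fin r) ℝ) + frob (γ • P) := by
          rw [hH_def]; exact frob_sub_le _ _
      _ = Real.sqrt (r:ℝ) + γ * frob P := by
          rw [frob_one, frob_smul, abs_of_nonneg hγ0]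
      _ ≤ 3 * Real.sqrt (r:ℝ) := by linarith
  have hfH0 : 0 ≤ frob H := frob_nonneg H
  have hPH : finner P H = -(frob A ^ 2) := by
    rw [hH_def, finner_sub_right, finner_smul_right, hgram1, finner_self]
    linarith [hγp2]
  -- Q-facts
  have hQ1 : finner (Yᵀ * Y) 1 = frob Y ^ 2 := finner_gram_one Y
  have hQP : finner (Yᵀ * Y) P = frob Dg ^ 2 := by
    rw [hP_def, finner_comm, finner_gram A Y, hAY]
  have hDg2 : frob Dg ^ 2 ≤ (r:ℝ) * Smax ^ 2 := by
    rw [hDg_def, frob_sq]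
    have h10 : ∀ i : Fin r, ∑ j, Matrix.diagonal σ i j ^ 2 = σ i ^ 2 := by
      intro i
      rw [Finset.sum_eq_single i]
      · rw [Matrix.diagonal_apply_eq]
      · intro b _ hb
        rw [Matrix.diagonal_apply_ne' σ hb]
        ring
      · intro h; exact absurd (Finset.mem_univ i) h
    rw [Finset.sum_congr rfl (fun i _ => h10 i)]
    calc ∑ i : Fin r, σ i ^ 2 ≤ ∑ _i : Fin r, Smax ^ 2 :=
          Finset.sum_le_sum (fun i _ => pow_le_pow_left₀ (hσpos i).le (hmax1 i) 2)
      _ = (r:ℝ) * Smax ^ 2 := by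
          rw [Finset.sum_const, Finset.card_univ, Fintype.card_fin, nsmul_eq_mul]
  have hDg0 : 0 ≤ frob Dg ^ 2 := sq_nonneg _
  have hQH : (68/69) * frob Y ^ 2 ≤ finner (Yᵀ * Y) H := by
    rw [hH_def, finner_sub_right, finner_smul_right, hQ1, hQP]
    have key : 138 * (frob A ^ 2 * ((r:ℝ) * Smax ^ 2)) ≤ frob Y ^ 2 * frob P ^ 2 := by
      have f2 : (12 * (r:ℝ) * Smax) * (frob A ^ 2 * frob A ^ 2) ≤
          frob Y ^ 2 * ((r:ℝ) * frob P ^ 2) :=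
        mul_le_mul hy2l ha4 (by positivity) (sq_nonneg _)
      have f3 : (12 * (r:ℝ) * Smax) * (((23/2) * (r:ℝ) * Smax) * frob A ^ 2) ≤
          (12 * (r:ℝ) * Smax) * (frob A ^ 2 * frob A ^ 2) :=
        mul_le_mul_of_nonneg_left (mul_le_mul_of_nonneg_right hax2 (sq_nonneg (frob A)))
          (mul_nonneg (by positivity) hS.le)
      have f4 : 138 * (frob A ^ 2 * ((r:ℝ) * Smax ^ 2)) * (r:ℝ) ≤
          frob Y ^ 2 * frob P ^ 2 * (r:ℝ) := by linarith only [f2, f3]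
      exact le_of_mul_le_mul_right f4 hr0
    have h11 : γ * frob Dg ^ 2 ≤ (1/69) * frob Y ^ 2 := by
      have h12 : γ * frob Dg ^ 2 ≤ γ * ((r:ℝ) * Smax ^ 2) :=
        mul_le_mul_of_nonneg_left hDg2 hγ0
      have h13 : γ * ((r:ℝ) * Smax ^ 2) * frob P ^ 2 =
          2 * (frob A ^ 2 * ((r:ℝ) * Smax ^ 2)) := by
        rw [show γ * ((r:ℝ) * Smax ^ 2) * frob P ^ 2
            = γ * frob P ^ 2 * ((r:ℝ) * Smax ^ 2) by ring, hγp2]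
        ring
      nlinarith only [h12, h13, key, mul_pos hppos hppos, sq_nonneg (frob Y), hγ0, hDg0]
    linarith
  -- the scalar t and matrices T, N
  obtain ⟨t, ht_def⟩ : ∃ x : ℝ, x = (5/4) * μ := ⟨_, rfl⟩
  have ht0 : 0 ≤ t := by rw [ht_def]; linarith
  have ht54 : t ≤ 5/216 := by rw [ht_def]; linarith
  have hrt : (r:ℝ) * t ≤ 5/216 := by
    rw [ht_def]; nlinarith only [hμr, hμ0, hr1]
  have hsqt : Real.sqrt (r:ℝ) * t ≤ 5/216 := by
    nlinarith only [hrt, hsqr, ht0, hsq1]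
  have htfH : t * frob H ≤ 5/72 := by
    have h1 : t * frob H ≤ t * (3 * Real.sqrt (r:ℝ)) := mul_le_mul_of_nonneg_left hfH ht0
    nlinarith only [h1, hsqt]
  have htfH0 : 0 ≤ t * frob H := mul_nonneg ht0 hfH0
  set T := (1 : Matrix (Fin r) (Fin r) ℝ) + t • H with hT_def
  clear_value T
  have hTdet : IsUnit T.det := by
    have h11 : T = 1 - (-(t • H)) := by rw [hT_def]; abel
    rw [h11]
    apply isUnit_one_sub_det
    rw [frob_neg, frob_smul, abs_of_nonneg ht0]
    linarith
  set N := T⁻¹ - 1 with hN_def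
  clear_value N
  have hTinv : T * T⁻¹ = 1 := Matrix.mul_nonsing_inv T hTdet
  have hTinvN : T⁻¹ = 1 + N := by rw [hN_def]; abel
  have hNrec : N = -(t • H) - t • (H * N) := by
    have h12 : (1 + t • H) * (1 + N) = 1 := by rw [← hT_def, ← hTinvN]; exact hTinv
    have expand : (1 + t • H) * (1 + N) = 1 + (N + (t • H + t • (H * N))) := by
      rw [Matrix.add_mul, Matrix.one_mul, Matrix.mul_add, Matrix.mul_one, smul_mul_assoc]
      abel
    rw [expand] at h12
    have h14 : N + (t • H + t • (H * N)) = 0 := by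
      have h15 : (1 : Matrix (Fin r) (Fin r) ℝ) + (N + (t • H + t • (H * N))) = 1 + 0 := by
        rw [add_zero]; exact h12
      exact add_left_cancel h15
    have h16 : N = -(t • H + t • (H * N)) := eq_neg_of_add_eq_zero_left h14
    exact h16.trans (by abel)
  have hfN : frob N ≤ (9/8) * (t * frob H) := by
    have h16 : frob N ≤ t * frob H + t * frob H * frob N := by
      calc frob N = frob (-(t • H) - t • (H * N)) := by rw [← hNrec]
        _ ≤ frob (-(t • H)) + frob (t • (H * N)) := frob_sub_le _ _
        _ = t * frob H + t * frob (H * N) := by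
            rw [frob_neg, frob_smul, frob_smul, abs_of_nonneg ht0]
        _ ≤ t * frob H + t * frob H * frob N := by
            have h17 := frob_mul_le H N
            nlinarith only [h17, ht0]
    nlinarith only [h16, htfH, frob_nonneg N, htfH0,
      mul_le_mul_of_nonneg_right htfH (frob_nonneg N)]
  -- U and V
  set U := A * T with hU_def
  clear_value U
  set V := Y * (T⁻¹)ᵀ with hV_def
  clear_value V
  have hUV : U * Vᵀ = Dg := by
    calc U * Vᵀ = (A * T) * (T⁻¹ * Yᵀ) := by
          rw [hU_def, hV_def, Matrix.transpose_mul, Matrix.transpose_transpose]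
      _ = A * ((T * T⁻¹) * Yᵀ) := by rw [Matrix.mul_assoc, Matrix.mul_assoc]
      _ = Dg := by rw [hTinv, Matrix.one_mul, hAY]
  have hUeq : U = A + t • (A * H) := by
    rw [hU_def, hT_def, Matrix.mul_add, Matrix.mul_one, mul_smul_comm]
  have hVeq : V = Y + Y * Nᵀ := by
    rw [hV_def, hTinvN, Matrix.transpose_add, Matrix.transpose_one, Matrix.mul_add,
      Matrix.mul_one]
  -- bound on frob U
  have hfAH : frob (A * H) ≤ 3 * Real.sqrt (r:ℝ) * frob A := by
    have hAH2 : A * H = A - γ • (A * P) := by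
      rw [hH_def, Matrix.mul_sub, Matrix.mul_one, mul_smul_comm]
    have h17 : frob (A * P) ≤ frob A * frob P := frob_mul_le A P
    have h18 : γ * (frob A * frob P) ≤ 2 * Real.sqrt (r:ℝ) * frob A := by
      nlinarith only [hγp, ha0, hγ0, hppos]
    calc frob (A * H) ≤ frob A + frob (γ • (A * P)) := by
          rw [hAH2]; exact frob_sub_le _ _
      _ = frob A + γ * frob (A * P) := by rw [frob_smul, abs_of_nonneg hγ0]
      _ ≤ frob A + γ * (frob A * frob P) := by
          nlinarith only [h17, hγ0]
      _ ≤ 3 * Real.sqrt (r:ℝ) * frob A := by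
          nlinarith only [h18, hsq1, ha0]
  have hU2 : frob U ^ 2 ≤ frob X ^ 2 := by
    have hexp : frob U ^ 2 =
        frob A ^ 2 + 2 * (t * -(frob A ^ 2)) + (t * frob (A * H)) ^ 2 := by
      rw [hUeq, frob_sq_add, finner_smul_right, finner_mul_right A A H, ← hP_def, hPH,
        frob_smul, abs_of_nonneg ht0]
    have h19 : (t * frob (A * H)) ^ 2 ≤ 9 * (r:ℝ) * (t ^ 2 * frob A ^ 2) := by
      have h20 : t * frob (A * H) ≤ t * (3 * Real.sqrt (r:ℝ) * frob A) :=
        mul_le_mul_of_nonneg_left hfAH ht0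
      have h21 : 0 ≤ t * frob (A * H) := mul_nonneg ht0 (frob_nonneg _)
      have h20sq := mul_le_mul h20 h20 h21
        (mul_nonneg ht0 (mul_nonneg (mul_nonneg (by norm_num) (Real.sqrt_nonneg _)) ha0))
      have e : (t * (3 * Real.sqrt (r:ℝ) * frob A)) * (t * (3 * Real.sqrt (r:ℝ) * frob A))
          = 9 * (r:ℝ) * (t ^ 2 * frob A ^ 2) := by
        rw [show (t * (3 * Real.sqrt (r:ℝ) * frob A)) * (t * (3 * Real.sqrt (r:ℝ) * frob A))
            = 9 * Real.sqrt (r:ℝ) ^ 2 * (t ^ 2 * frob A ^ 2) by ring, hsq2]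
      nlinarith only [h20sq, e]
    have h22 : frob A - μ * frob A ≤ frob X := by linarith only [haX]
    have h23 : 0 ≤ frob A - μ * frob A := by
      linarith only [mul_le_mul_of_nonneg_right hμ54 ha0, ha0]
    have h24 : (frob A - μ * frob A) ^ 2 ≤ frob X ^ 2 := by
      nlinarith only [h22, h23, hx0]
    have ht2 : 9 * (r:ℝ) * (t ^ 2 * frob A ^ 2) = (225/16) * ((r:ℝ) * (μ ^ 2 * frob A ^ 2)) := by
      rw [ht_def]; ring
    have hμ2 : (r:ℝ) * (μ ^ 2 * frob A ^ 2) ≤ (1/54) * (μ * frob A ^ 2) := by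
      have h25 := mul_le_mul_of_nonneg_right hμr (mul_nonneg hμ0 (sq_nonneg (frob A)))
      linarith only [h25]
    have hta : t * frob A ^ 2 = (5/4) * (μ * frob A ^ 2) := by rw [ht_def]; ring
    have h24' : (frob A - μ * frob A) ^ 2
        = frob A ^ 2 - 2 * (μ * frob A ^ 2) + μ ^ 2 * frob A ^ 2 := by ring
    rw [hexp]
    linarith only [h19, ht2, hμ2, hta, h24, h24',
      mul_nonneg (sq_nonneg μ) (sq_nonneg (frob A)), mul_nonneg hμ0 (sq_nonneg (frob A))]
  have hfU : frob U ≤ frob X := le_of_sq_le_sq' (frob_nonneg U) hx0 hU2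
  -- bound on frob V
  have hYA : Y * Aᵀ = Dg := by
    have h26 := congrArg Matrix.transpose hAY
    rwa [Matrix.transpose_mul, Matrix.transpose_transpose, hDg_def,
      Matrix.diagonal_transpose, ← hDg_def] at h26
  have hYP : Y * P = Dg * A := by rw [hP_def, ← Matrix.mul_assoc, hYA]
  have hfYP : frob (Y * P) ≤ Smax * frob A := by
    rw [hYP, hDg_def]
    apply frob_diag_mul_le σ A Smax hS.le
    intro i
    rw [abs_of_pos (hσpos i)]
    exact hmax1 i
  have hfYH : frob (Y * H) ≤ (17/15) * β := by
    have hYH2 : Y * H = Y - γ • (Y * P) := by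
      rw [hH_def, Matrix.mul_sub, Matrix.mul_one, mul_smul_comm]
    have h27 : γ * (Smax * frob A) ≤ 2 * (r:ℝ) * Smax / frob A := by
      rw [hγ_def, div_mul_eq_mul_div, div_le_div_iff₀ (by positivity) hapos]
      -- 2 a² (S a) a ≤ 2 r S p²
      nlinarith only [ha4, hS, ha0, hapos]
    have h28 : 2 * (r:ℝ) * Smax / frob A ≤ (2/15) * β := by
      apply le_of_sq_le_sq' (by positivity) (by positivity)
      rw [div_pow, div_le_iff₀ (by positivity)]
      have e2 : ((2/15) * β) ^ 2 = (4/225) * (20 * (r:ℝ) * Smax) := by rw [mul_pow, hβ2]; ring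
      rw [e2]
      -- (2rS)² ≤ (16/45) rS a²
      nlinarith only [hax2, hS, hr0, mul_pos hr0 hS, mul_le_mul_of_nonneg_left hax2
        (mul_nonneg (mul_nonneg (by norm_num : (0:ℝ) ≤ 16/45) hr0.le) hS.le)]
    calc frob (Y * H) ≤ frob Y + frob (γ • (Y * P)) := by
          rw [hYH2]; exact frob_sub_le _ _
      _ = frob Y + γ * frob (Y * P) := by rw [frob_smul, abs_of_nonneg hγ0]
      _ ≤ frob Y + γ * (Smax * frob A) := by nlinarith only [hfYP, hγ0]
      _ ≤ (17/15) * β := by linarith only [hY2, h27, h28]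
  have hfYH0 : 0 ≤ frob (Y * H) := frob_nonneg _
  have hNt : Nᵀ = -(t • H) - t • (Nᵀ * H) := by
    have h29 := congrArg Matrix.transpose hNrec
    rwa [Matrix.transpose_sub, Matrix.transpose_neg, Matrix.transpose_smul,
      Matrix.transpose_smul, Matrix.transpose_mul, hHt] at h29
  have hYNrec : Y * Nᵀ = -(t • (Y * H)) - t • ((Y * Nᵀ) * H) := by
    calc Y * Nᵀ = Y * (-(t • H) - t • (Nᵀ * H)) := by rw [← hNt]
      _ = -(t • (Y * H)) - t • (Y * (Nᵀ * H)) := by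
          rw [Matrix.mul_sub, Matrix.mul_neg, mul_smul_comm, mul_smul_comm]
      _ = -(t • (Y * H)) - t • ((Y * Nᵀ) * H) := by rw [Matrix.mul_assoc]
  have hfYN : frob (Y * Nᵀ) ≤ (9/8) * (t * frob (Y * H)) := by
    have h30 : frob (Y * Nᵀ) ≤ t * frob (Y * H) + t * frob H * frob (Y * Nᵀ) := by
      calc frob (Y * Nᵀ) = frob (-(t • (Y * H)) - t • ((Y * Nᵀ) * H)) := by rw [← hYNrec]
        _ ≤ frob (-(t • (Y * H))) + frob (t • ((Y * Nᵀ) * H)) := frob_sub_le _ _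
        _ = t * frob (Y * H) + t * frob ((Y * Nᵀ) * H) := by
            rw [frob_neg, frob_smul, frob_smul, abs_of_nonneg ht0]
        _ ≤ t * frob (Y * H) + t * frob H * frob (Y * Nᵀ) := by
            have h31 := frob_mul_le (Y * Nᵀ) H
            nlinarith only [h31, ht0]
    nlinarith only [h30, htfH, frob_nonneg (Y * Nᵀ),
      mul_le_mul_of_nonneg_right htfH (frob_nonneg (Y * Nᵀ)),
      mul_nonneg ht0 hfYH0]
  have hV2 : frob V ^ 2 ≤ frob Y ^ 2 := by
    have hexpV : frob V ^ 2 = frob Y ^ 2 + 2 * finner (Yᵀ * Y) Nᵀ + frob (Y * Nᵀ) ^ 2 := by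
      rw [hVeq, frob_sq_add, finner_mul_right Y Y Nᵀ]
    have hQ2 : frob (Yᵀ * Y) ≤ frob Y ^ 2 := by
      have h32 := frob_mul_le Yᵀ Y
      rw [frob_transpose] at h32
      nlinarith only [h32]
    have b2 : |finner (Yᵀ * Y) (Nᵀ * H)| ≤ frob Y ^ 2 * (frob N * frob H) := by
      have c1 := abs_finner_le (Yᵀ * Y) (Nᵀ * H)
      have c3 : frob (Nᵀ * H) ≤ frob N * frob H := by
        have := frob_mul_le Nᵀ H
        rwa [frob_transpose] at this
      nlinarith only [c1, c3, hQ2, frob_nonneg (Nᵀ * H), frob_nonneg (Yᵀ * Y),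
        frob_nonneg N, frob_nonneg H, sq_nonneg (frob Y), mul_nonneg (frob_nonneg N) (frob_nonneg H)]
    have hQN : finner (Yᵀ * Y) Nᵀ
        ≤ -(t * ((68/69) * frob Y ^ 2)) + t * (frob Y ^ 2 * (frob N * frob H)) := by
      have h33 : finner (Yᵀ * Y) Nᵀ
          = -(t * finner (Yᵀ * Y) H) - t * finner (Yᵀ * Y) (Nᵀ * H) := by
        calc finner (Yᵀ * Y) Nᵀ = finner (Yᵀ * Y) (-(t • H) - t • (Nᵀ * H)) := by rw [← hNt]
          _ = -(t * finner (Yᵀ * Y) H) - t * finner (Yᵀ * Y) (Nᵀ * H) := by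
              rw [finner_sub_right, finner_neg_right, finner_smul_right, finner_smul_right]
      rw [h33]
      have h34 : t * ((68/69) * frob Y ^ 2) ≤ t * finner (Yᵀ * Y) H :=
        mul_le_mul_of_nonneg_left hQH ht0
      have h35' : -(t * finner (Yᵀ * Y) (Nᵀ * H)) ≤ t * (frob Y ^ 2 * (frob N * frob H)) := by
        have h36 := neg_abs_le (finner (Yᵀ * Y) (Nᵀ * H))
        nlinarith only [b2, h36, ht0]
      linarith only [h34, h35']
    have n1 : frob N * frob H ≤ 15/64 := by
      have h37 : frob N * frob H ≤ (9/8) * (t * frob H) * frob H :=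
        mul_le_mul_of_nonneg_right hfN hfH0
      have h38 : frob H * frob H ≤ 9 * (r:ℝ) := by
        nlinarith only [hfH, hfH0, hsq2, hsq1]
      -- (9/8) t fH² ≤ (9/8)·9·r·t ≤ (81/8)(5/216)
      nlinarith only [h37, h38, ht0, hrt, mul_le_mul_of_nonneg_left h38 ht0]
    have n2 : finner (Yᵀ * Y) Nᵀ ≤ -(t * ((3317/4416) * frob Y ^ 2)) := by
      have h39 : t * (frob Y ^ 2 * (frob N * frob H)) ≤ t * (frob Y ^ 2 * (15/64)) := by
        apply mul_le_mul_of_nonneg_left _ ht0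
        exact mul_le_mul_of_nonneg_left n1 (sq_nonneg _)
      linarith only [hQN, h39]
    have n3 : frob (Y * Nᵀ) ^ 2 ≤ (81/64) * (t * t) * ((17/15) * β * ((17/15) * β)) := by
      have h40 : frob (Y * Nᵀ) ≤ (9/8) * (t * ((17/15) * β)) := by
        have := mul_le_mul_of_nonneg_left hfYH ht0
        linarith only [hfYN, this, mul_le_mul_of_nonneg_left
          (mul_le_mul_of_nonneg_left hfYH ht0) (by norm_num : (0:ℝ) ≤ 9/8)]
      have h41 : 0 ≤ (9/8) * (t * ((17/15) * β)) :=
        mul_nonneg (by norm_num) (mul_nonneg ht0 (mul_nonneg (by norm_num) hβpos.le))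
      nlinarith only [h40, h41, frob_nonneg (Y * Nᵀ)]
    have n4 : frob (Y * Nᵀ) ^ 2 ≤ (7/100) * t * frob Y ^ 2 := by
      -- (81/64)(289/225) t² β² with β² ≤ (5/3) y², t ≤ 5/216
      have h42 : β * β ≤ (5/3) * frob Y ^ 2 := by
        nlinarith only [hy2l, hβ2]
      have h43 : 0 ≤ t * t := mul_nonneg ht0 ht0
      nlinarith only [n3, h42, h43, ht54, ht0, sq_nonneg (frob Y), hy2l, hβpos,
        mul_le_mul_of_nonneg_left h42 h43,
        mul_le_mul_of_nonneg_right (mul_le_mul_of_nonneg_right ht54 ht0) (sq_nonneg (frob Y))]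
    linarith only [hexpV, n2, n4, mul_nonneg ht0 (sq_nonneg (frob Y))]
  have hfV : frob V ≤ frob Y := le_of_sq_le_sq' (frob_nonneg V) hy0 hV2
  -- distance bounds
  have hUXd : U - X = (A - X) + t • (A * H) := by rw [hUeq]; abel
  have hUXb : frob (U - X) ≤ (36/7) * Real.sqrt (r:ℝ) * β * μ := by
    have h44 : frob (U - X) ≤ μ * frob A + t * frob (A * H) := by
      calc frob (U - X) = frob ((A - X) + t • (A * H)) := by rw [hUXd]
        _ ≤ frob (A - X) + frob (t • (A * H)) := frob_add_le _ _
        _ = frob (A - X) + t * frob (A * H) := by rw [frob_smul, abs_of_nonneg ht0]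
        _ ≤ μ * frob A + t * frob (A * H) := by linarith only [hδ]
    have h45 : t * frob (A * H) ≤ t * (3 * Real.sqrt (r:ℝ) * frob A) :=
      mul_le_mul_of_nonneg_left hfAH ht0
    have h46 : μ * frob A ≤ μ * ((54/53) * β) := mul_le_mul_of_nonneg_left haβ hμ0
    have h47 : t * (3 * Real.sqrt (r:ℝ) * frob A)
        = (15/4) * (Real.sqrt (r:ℝ) * (μ * frob A)) := by rw [ht_def]; ring
    have h48 : Real.sqrt (r:ℝ) * (μ * frob A) ≤ Real.sqrt (r:ℝ) * (μ * ((54/53) * β)) :=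
      mul_le_mul_of_nonneg_left h46 (Real.sqrt_nonneg _)
    have h49 : μ * frob A ≤ Real.sqrt (r:ℝ) * (μ * ((54/53) * β)) := by
      have h49a : μ * frob A ≤ Real.sqrt (r:ℝ) * (μ * frob A) := by
        nlinarith only [hsq1, mul_nonneg hμ0 ha0]
      linarith only [h49a, h48]
    have hsum : frob (U - X) ≤ (19/4) * ((54/53) * (Real.sqrt (r:ℝ) * (β * μ))) := by
      nlinarith only [h44, h45, h47, h48, h49]
    nlinarith only [hsum, mul_nonneg (Real.sqrt_nonneg (r:ℝ)) (mul_nonneg hβpos.le hμ0)]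
  have hVYeq : V - Y = Y * Nᵀ := by rw [hVeq]; abel
  have hVYb : frob (V - Y) ≤ (8/5) * (β * μ) := by
    rw [hVYeq]
    have h50 : t * frob (Y * H) ≤ t * ((17/15) * β) := mul_le_mul_of_nonneg_left hfYH ht0
    have h51 : t * ((17/15) * β) = (17/12) * (μ * β) := by rw [ht_def]; ring
    nlinarith only [hfYN, h50, h51, mul_nonneg hμ0 hβpos.le]
  have hUX0 : 0 ≤ frob (U - X) := frob_nonneg _
  have hVY0 : 0 ≤ frob (V - Y) := frob_nonneg _
  have hb1 : 0 ≤ (36/7) * Real.sqrt (r:ℝ) * β * μ :=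
    mul_nonneg (mul_nonneg (mul_nonneg (by norm_num) (Real.sqrt_nonneg _)) hβpos.le) hμ0
  refine ⟨U, V, hUV, hfU, hfV, ?_, ?_⟩
  · -- product bound
    have hprod : frob (U - X) * frob (V - Y)
        ≤ ((36/7) * Real.sqrt (r:ℝ) * β * μ) * ((8/5) * (β * μ)) :=
      mul_le_mul hUXb hVYb hVY0 hb1
    have e3 : ((36/7) * Real.sqrt (r:ℝ) * β * μ) * ((8/5) * (β * μ))
        = (288/35) * Real.sqrt (r:ℝ) * (β ^ 2 * μ ^ 2) := by ring
    have e4 : β ^ 2 * μ ^ 2 = β ^ 2 / Smin ^ 2 * frob E ^ 2 := by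
      rw [hμ_def]; field_simp
    have final : (288/35) * Real.sqrt (r:ℝ) * (β ^ 2 * μ ^ 2)
        ≤ 23 * Real.sqrt (r:ℝ) * (β ^ 2 * μ ^ 2) := by
      nlinarith only [Real.sqrt_nonneg (r:ℝ), mul_nonneg (sq_nonneg β) (sq_nonneg μ)]
    calc frob (U - X) * frob (V - Y)
        ≤ (288/35) * Real.sqrt (r:ℝ) * (β ^ 2 * μ ^ 2) := by rw [← e3]; exact hprod
      _ ≤ 23 * Real.sqrt (r:ℝ) * (β ^ 2 * μ ^ 2) := final
      _ = 23 * Real.sqrt (r:ℝ) * (β ^ 2 / Smin ^ 2) * frob E ^ 2 := by rw [e4]; ring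
  · have e5 : (36/7) * Real.sqrt (r:ℝ) * β * μ
        = 36 / 7 * Real.sqrt (r:ℝ) * (β / Smin) * frob E := by
      rw [hμ_def]; field_simp
    apply max_le
    · rw [← e5]; exact hUXb
    · rw [← e5]
      have h52 : (8/5) * (β * μ) ≤ (36/7) * Real.sqrt (r:ℝ) * β * μ := by
        nlinarith only [hsq1, mul_nonneg hβpos.le hμ0]
      linarith only [hVYb, h52]

end
end

section
/- Let M ∈ ℝ^{m×n} be a rank-r matrix, let δ > 0, δ₀ = δ/6, let Ω ⊆ [m]×[n] be nonempty with p = |Ω|/(mn), and set ρ = 8·p·δ₀² in the definition of G and F̃. Assume Ω satisfies the RSC property at level δ: (1/3)·p·‖M − XYᵀ‖_F² ≤ ‖P_Ω(M − XYᵀ)‖_F² ≤ 2·p·‖M − XYᵀ‖_F² for all (X,Y) ∈ K₁ ∩ K₂ ∩ K(δ). Suppose (X₀, Y₀) ∈ (√(2/3)·K₁) ∩ (√(2/3)·K₂) ∩ K(δ₀). Then every pair (X,Y) ∈ ℝ^{m×r}×ℝ^{n×r} with F̃(X,Y) ≤ 2·F̃(X₀, Y₀) satisfies (X,Y) ∈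 K₁ ∩ K₂. -/
open Matrix
open scoped Classical

noncomputable section

lemma G0_nonneg (z : ℝ) : 0 ≤ G0 z := sq_nonneg _

lemma G0_eq_zero_of_le {z : ℝ} (h : z ≤ 1) : G0 z = 0 := by
  unfold G0
  rw [max_eq_left (by linarith)]
  norm_num

lemma G0_le_quarter {z : ℝ} (h : G0 z ≤ 1 / 4) : z ≤ 3 / 2 := by
  unfold G0 at h
  have h0 : 0 ≤ max 0 (z - 1) := le_max_left _ _
  have h2 : max 0 (z - 1) ≤ 1 / 2 := by nlinarith
  have := le_max_right 0 (z - 1)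
  linarith

lemma sqrt_nonneg' {m n : ℕ} (A : Matrix (Fin m) (Fin n) ℝ) : 0 ≤ frob A :=
  Real.sqrt_nonneg _

lemma rowNorm_nonneg {m n : ℕ} (A : Matrix (Fin m) (Fin n) ℝ) (i : Fin m) :
    0 ≤ rowNorm A i := Real.sqrt_nonneg _

lemma sq_arg_le {b c : ℝ} (hb : 0 < b) (hc : 0 ≤ c) (h : c ≤ Real.sqrt (2 / 3) * b) :
    3 * c ^ 2 / (2 * b ^ 2) ≤ 1 := by
  have hs : Real.sqrt (2 / 3) ^ 2 = 2 / 3 := Real.sq_sqrt (by norm_num)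
  have hc2 : c ^ 2 ≤ 2 / 3 * b ^ 2 := by nlinarith [Real.sqrt_nonneg (2 / 3 : ℝ)]
  rw [div_le_one (by positivity)]
  linarith

lemma le_of_sq_arg {b c ρ : ℝ} (hb : 0 < b) (hc : 0 ≤ c) (hρ : 0 < ρ)
    (h : ρ * G0 (3 * c ^ 2 / (2 * b ^ 2)) ≤ ρ / 4) : c ≤ b := by
  have hG : G0 (3 * c ^ 2 / (2 * b ^ 2)) ≤ 1 / 4 := by
    by_contra hcon
    push_neg at hcon
    nlinarith
  have h2 := G0_le_quarter hG
  rw [div_le_iff₀ (by positivity)] at h2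
  nlinarith

set_option maxHeartbeats 1000000 in
/-- **Proposition: bounded objective value implies `(X,Y) ∈ K₁ ∩ K₂`.** -/
theorem stmt13 (m n r : ℕ) (hm : 1 ≤ m) (hn : 1 ≤ n) (hr : 1 ≤ r)
    (M : Matrix (Fin m) (Fin n) ℝ) (hrank : M.rank = r)
    (δ δ0 : ℝ) (hδ : 0 < δ) (hδ0 : δ0 = δ / 6)
    (Ω : Finset (Fin m × Fin n)) (hΩ : Ω.Nonempty)
    (p : ℝ) (hp : p = (Ω.card : ℝ) / (m * n))
    (βT β1 β2 : ℝ) (hβT : 0 < βT) (hβ1 : 0 < β1) (hβ2 : 0 < β2)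
    (ρ : ℝ) (hρ : ρ = 8 * p * δ0 ^ 2)
    (hRSC : ∀ (X : Matrix (Fin m) (Fin r) ℝ) (Y : Matrix (Fin n) (Fin r) ℝ),
      K1mem β1 β2 X Y → K2mem βT X Y → Kmem M δ X Y →
      1 / 3 * p * frob (M - X * Yᵀ) ^ 2 ≤ frob (projOmega Ω (M - X * Yᵀ)) ^ 2 ∧
        frob (projOmega Ω (M - X * Yᵀ)) ^ 2 ≤ 2 * p * frob (M - X * Yᵀ) ^ 2)
    (X0 : Matrix (Fin m) (Fin r) ℝ) (Y0 : Matrix (Fin n) (Fin r) ℝ)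
    (h0K1 : K1mem (Real.sqrt (2 / 3) * β1) (Real.sqrt (2 / 3) * β2) X0 Y0)
    (h0K2 : K2mem (Real.sqrt (2 / 3) * βT) X0 Y0)
    (h0K : Kmem M δ0 X0 Y0)
    (X : Matrix (Fin m) (Fin r) ℝ) (Y : Matrix (Fin n) (Fin r) ℝ)
    (hF : Ftilde Ω M ρ β1 β2 βT X Y ≤ 2 * Ftilde Ω M ρ β1 β2 βT X0 Y0) :
    K1mem β1 β2 X Y ∧ K2mem βT X Y := by
  have hcard : (0 : ℝ) < Ω.card := by
    exact_mod_cast Finset.card_pos.mpr hΩ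
  have hmn : (0 : ℝ) < (m : ℝ) * n := by
    have : (0 : ℝ) < (m : ℝ) := by exact_mod_cast hm
    have : (0 : ℝ) < (n : ℝ) := by exact_mod_cast hn
    positivity
  have hp0 : 0 < p := by rw [hp]; positivity
  have hδ00 : 0 < δ0 := by rw [hδ0]; linarith
  have hρ0 : 0 < ρ := by rw [hρ]; positivity
  have hs1 : Real.sqrt (2 / 3 : ℝ) ≤ 1 := Real.sqrt_le_one.mpr (by norm_num)
  -- X0,Y0 in K1 ∩ K2 ∩ K(δ)
  have h0K1' : K1mem β1 β2 X0 Y0 := by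
    constructor
    · intro i
      exact (h0K1.1 i).trans (by nlinarith)
    · intro j
      exact (h0K1.2 j).trans (by nlinarith)
  have h0K2' : K2mem βT X0 Y0 := by
    constructor
    · exact h0K2.1.trans (by nlinarith)
    · exact h0K2.2.trans (by nlinarith)
  have h0Kδ : Kmem M δ X0 Y0 := h0K.trans (by rw [hδ0]; linarith)
  -- Greg at (X0,Y0) vanishes
  have hG0 : Greg ρ β1 β2 βT X0 Y0 = 0 := by
    unfold Greg
    rw [Finset.sum_eq_zero (fun i _ =>
        G0_eq_zero_of_le (sq_arg_le hβ1 (rowNorm_nonneg _ _) (h0K1.1 i))),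
      Finset.sum_eq_zero (fun j _ =>
        G0_eq_zero_of_le (sq_arg_le hβ2 (rowNorm_nonneg _ _) (h0K1.2 j))),
      G0_eq_zero_of_le (sq_arg_le hβT (sqrt_nonneg' _) h0K2.1),
      G0_eq_zero_of_le (sq_arg_le hβT (sqrt_nonneg' _) h0K2.2)]
    ring
  -- bound Ftilde at (X0,Y0)
  have hRSC0 := (hRSC X0 Y0 h0K1' h0K2' h0Kδ).2
  have h0K' : frob (M - X0 * Y0ᵀ) ≤ δ0 := h0K
  have hfr0 : frob (M - X0 * Y0ᵀ) ^ 2 ≤ δ0 ^ 2 := by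
    have := sqrt_nonneg' (M - X0 * Y0ᵀ)
    nlinarith
  have hF0 : Ftilde Ω M ρ β1 β2 βT X0 Y0 ≤ ρ / 8 := by
    unfold Ftilde
    rw [hG0, hρ]
    nlinarith
  have hF4 : Ftilde Ω M ρ β1 β2 βT X Y ≤ ρ / 4 := by linarith
  -- basic nonnegativity facts
  have hfrsq : 0 ≤ frob (projOmega Ω (M - X * Yᵀ)) ^ 2 := sq_nonneg _
  have hsumX : (0:ℝ) ≤ ρ * ∑ i, G0 (3 * rowNorm X i ^ 2 / (2 * β1 ^ 2)) := by
    apply mul_nonneg hρ0.le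
    exact Finset.sum_nonneg fun _ _ => G0_nonneg _
  have hsumY : (0:ℝ) ≤ ρ * ∑ j, G0 (3 * rowNorm Y j ^ 2 / (2 * β2 ^ 2)) := by
    apply mul_nonneg hρ0.le
    exact Finset.sum_nonneg fun _ _ => G0_nonneg _
  have htX : (0:ℝ) ≤ ρ * G0 (3 * frob X ^ 2 / (2 * βT ^ 2)) :=
    mul_nonneg hρ0.le (G0_nonneg _)
  have htY : (0:ℝ) ≤ ρ * G0 (3 * frob Y ^ 2 / (2 * βT ^ 2)) :=
    mul_nonneg hρ0.le (G0_nonneg _)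
  have hFexp : Ftilde Ω M ρ β1 β2 βT X Y =
      (1 / 2) * frob (projOmega Ω (M - X * Yᵀ)) ^ 2 +
      (ρ * ∑ i, G0 (3 * rowNorm X i ^ 2 / (2 * β1 ^ 2)) +
        ρ * ∑ j, G0 (3 * rowNorm Y j ^ 2 / (2 * β2 ^ 2)) +
        ρ * G0 (3 * frob X ^ 2 / (2 * βT ^ 2)) +
        ρ * G0 (3 * frob Y ^ 2 / (2 * βT ^ 2))) := rfl
  rw [hFexp] at hF4
  refine ⟨⟨fun i => ?_, fun j => ?_⟩, ?_, ?_⟩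
  · refine le_of_sq_arg hβ1 (rowNorm_nonneg _ _) hρ0 ?_
    have hle : G0 (3 * rowNorm X i ^ 2 / (2 * β1 ^ 2)) ≤
        ∑ i', G0 (3 * rowNorm X i' ^ 2 / (2 * β1 ^ 2)) :=
      Finset.single_le_sum (f := fun i' => G0 (3 * rowNorm X i' ^ 2 / (2 * β1 ^ 2)))
        (fun _ _ => G0_nonneg _) (Finset.mem_univ i)
    have := mul_le_mul_of_nonneg_left hle hρ0.le
    linarith
  · refine le_of_sq_arg hβ2 (rowNorm_nonneg _ _) hρ0 ?_
    have hle : G0 (3 * rowNorm Y j ^ 2 / (2 * β2 ^ 2)) ≤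
        ∑ j', G0 (3 * rowNorm Y j' ^ 2 / (2 * β2 ^ 2)) :=
      Finset.single_le_sum (f := fun j' => G0 (3 * rowNorm Y j' ^ 2 / (2 * β2 ^ 2)))
        (fun _ _ => G0_nonneg _) (Finset.mem_univ j)
    have := mul_le_mul_of_nonneg_left hle hρ0.le
    linarith
  · refine le_of_sq_arg hβT (sqrt_nonneg' _) hρ0 ?_
    linarith
  · refine le_of_sq_arg hβT (sqrt_nonneg' _) hρ0 ?_
    linarith

end
end
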